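/- arXiv:1012.5295 — 4 statements merged into one kernel-verified Lean document; each statement's English description precedes it below -/
import Mathlib

section
/- For N ≥ 2, β ∈ (0, π), and c ∈ (0, 1], the measure of Ω_β \ 𝑇̃Ω_β(cε) equals c^N times the measure of Ω_β \ 𝑇̃Ω_β(ε), for all small ε > 0. -/
/-!
The profile `g_ε(b)` is jointly homogeneous of degree one in `(ε, b)`, so the region above it,
without the truncation `|x| < 1`, satisfies `region(cε) = c • region(ε)`. The difference
`region(0) \ region(ε)` has `|x₁| ≤ ε` and `|x̄| ≤ ε`, hence lies in the ball of radius `2ε`; for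
`ε < 1/2` the truncation therefore does not cut it, and scaling by `c` multiplies its Lebesgue
measure by `c ^ N`.
-/

open Real MeasureTheory Pointwise Set Metric

/-- The paper's `g_ε(x̄)` as a function of `b = |x̄|`. -/
noncomputable def profile (β ε b : ℝ) : ℝ :=
  if b ≤ ε * sin β then ε - b * tan (β / 2) else b * (cos β / sin β)

lemma profile_mul_mul {r : ℝ} (hr : 0 < r) (β ε b : ℝ) :
    profile β (r * ε) (r * b) = r * profile β ε b := by
  have hiff : r * b ≤ r * ε * sin β ↔ b ≤ ε * sin β := by
    rw [mul_assoc]; exact mul_le_mul_iff_right₀ hr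
  simp only [profile, hiff]
  split_ifs <;> ring

lemma le_mul_sin_of_profile_lt_of_le {β δ b t : ℝ} (hb : 0 ≤ b)
    (h₀ : profile β 0 b < t) (hδ : t ≤ profile β δ b) : b ≤ δ * sin β := by
  by_contra! hlt
  rcases hb.eq_or_lt with rfl | hb
  · simp only [profile, zero_mul, le_refl, if_true, sub_self, hlt.not_ge, if_false] at h₀ hδ
    linarith
  · simp only [profile, zero_mul, hb.not_ge, hlt.not_ge, if_false] at h₀ hδ
    linarith

lemma neg_le_profile_zero {β δ b : ℝ} (hβ : β ∈ Ioo 0 π) (hb : 0 ≤ b) (hbδ : b ≤ δ * sin β) :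
    -δ ≤ profile β 0 b := by
  have hsin : 0 < sin β := sin_pos_of_pos_of_lt_pi hβ.1 hβ.2
  have hδ : 0 ≤ δ := nonneg_of_mul_nonneg_left (hb.trans hbδ) hsin
  rcases hb.eq_or_lt with rfl | hb
  · simp [profile, hδ]
  · rw [profile, if_neg (by simpa using hb), ← mul_div_assoc, le_div_iff₀ hsin]
    nlinarith [neg_one_le_cos β]

lemma abs_le_of_profile_lt_of_le {β δ b t : ℝ} (hβ : β ∈ Ioo 0 π) (hb : 0 ≤ b)
    (h₀ : profile β 0 b < t) (hδ : t ≤ profile β δ b) : |t| ≤ δ ∧ b ≤ δ := by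
  have hsin : 0 < sin β := sin_pos_of_pos_of_lt_pi hβ.1 hβ.2
  have htan : 0 ≤ tan (β / 2) :=
    (tan_pos_of_pos_of_lt_pi_div_two (by linarith [hβ.1]) (by linarith [hβ.2])).le
  have hbδ := le_mul_sin_of_profile_lt_of_le hb h₀ hδ
  have hlow := neg_le_profile_zero hβ hb hbδ
  rw [profile, if_pos hbδ] at hδ
  refine ⟨abs_le.2 ⟨by linarith, by nlinarith⟩, ?_⟩
  nlinarith [sin_le_one β]

section Euclidean

variable {ι : Type*} [Fintype ι]

/-- The paper's `|x̄|`, the norm of the coordinates of `x` other than `x i`. -/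
noncomputable def transverseNorm (i : ι) (x : EuclideanSpace ℝ ι) : ℝ :=
  √(‖x‖ ^ 2 - x i ^ 2)

lemma transverseNorm_nonneg (i : ι) (x : EuclideanSpace ℝ ι) : 0 ≤ transverseNorm i x :=
  sqrt_nonneg _

lemma sq_transverseNorm (i : ι) (x : EuclideanSpace ℝ ι) :
    transverseNorm i x ^ 2 = ‖x‖ ^ 2 - x i ^ 2 := by
  have : x i ^ 2 ≤ ‖x‖ ^ 2 := by
    simpa [sq_abs] using pow_le_pow_left₀ (norm_nonneg _) (PiLp.norm_apply_le x i) 2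
  exact sq_sqrt (sub_nonneg.2 this)

lemma transverseNorm_smul {r : ℝ} (hr : 0 ≤ r) (i : ι) (x : EuclideanSpace ℝ ι) :
    transverseNorm i (r • x) = r * transverseNorm i x := by
  rw [transverseNorm, transverseNorm, norm_smul, norm_of_nonneg hr, PiLp.smul_apply,
    smul_eq_mul, ← sqrt_sq hr, ← sqrt_mul (sq_nonneg r), sqrt_sq hr]
  ring_nf

/-- The paper's `𝑇̃Ω_β(ε)` without the truncation `|x| < 1`, with `x i` as the axis coordinate. -/
def profileRegion (β : ℝ) (i : ι) (ε : ℝ) : Set (EuclideanSpace ℝ ι) :=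
  {x | profile β ε (transverseNorm i x) < x i}

lemma smul_mem_profileRegion_iff {β ε r : ℝ} (hr : 0 < r) {i : ι} {x : EuclideanSpace ℝ ι} :
    r • x ∈ profileRegion β i (r * ε) ↔ x ∈ profileRegion β i ε := by
  simp only [profileRegion, mem_ofPred_eq, transverseNorm_smul hr.le, profile_mul_mul hr,
    PiLp.smul_apply, smul_eq_mul, mul_lt_mul_iff_right₀ hr]

lemma profileRegion_mul {β ε r : ℝ} (hr : 0 < r) (i : ι) :
    profileRegion β i (r * ε) = r • profileRegion β i ε := by
  ext x
  rw [mem_smul_set_iff_inv_smul_mem₀ hr.ne']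
  conv_rhs => rw [← smul_mem_profileRegion_iff hr, smul_inv_smul₀ hr.ne']

lemma profileRegion_zero_diff_mul {β ε r : ℝ} (hr : 0 < r) (i : ι) :
    profileRegion β i 0 \ profileRegion β i (r * ε) =
      r • (profileRegion β i 0 \ profileRegion β i ε) := by
  conv_lhs => rw [← mul_zero r]
  rw [profileRegion_mul hr, profileRegion_mul hr, smul_set_sdiff₀ hr.ne']

lemma profileRegion_zero_diff_subset_ball {β δ : ℝ} (hβ : β ∈ Ioo 0 π) (hδ : 0 < δ) (i : ι) :
    profileRegion β i 0 \ profileRegion β i δ ⊆ ball 0 (2 * δ) := by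
  rintro x ⟨h₀, hδx⟩
  obtain ⟨hxi, hb⟩ := abs_le_of_profile_lt_of_le hβ (transverseNorm_nonneg i x) h₀ (not_lt.1 hδx)
  have hnorm : ‖x‖ ^ 2 = x i ^ 2 + transverseNorm i x ^ 2 := by rw [sq_transverseNorm]; ring
  rw [mem_ball_zero_iff, ← sq_lt_sq₀ (norm_nonneg x) (by positivity), hnorm]
  nlinarith [sq_abs (x i), abs_nonneg (x i), transverseNorm_nonneg i x]

lemma profileRegion_zero_diff_inter_ball {β δ : ℝ} (hβ : β ∈ Ioo 0 π) (hδ : 0 < δ)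
    (hδ₁ : δ ≤ 1 / 2) (i : ι) :
    (profileRegion β i 0 ∩ ball 0 1) \ (profileRegion β i δ ∩ ball 0 1) =
      profileRegion β i 0 \ profileRegion β i δ := by
  rw [← inter_sdiff_distrib_right, inter_eq_left]
  exact (profileRegion_zero_diff_subset_ball hβ hδ i).trans (ball_subset_ball (by linarith))

end Euclidean

/-- scaling property of the measure of `Ω_β \ 𝑇̃Ω_β(cε)`:
for `c ∈ (0,1]` and all small `ε > 0`,
`|Ω_β \ 𝑇̃Ω_β(cε)| = c^N |Ω_β \ 𝑇̃Ω_β(ε)|`, where `𝑇̃Ω_β(ε)` is the open set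
bounded below by the Lipschitz profile `g_ε` and `Ω_β = 𝑇̃Ω_β(0)`. -/
theorem measure_scaling (N : ℕ) (hN : 2 ≤ N) (β : ℝ) (hβ : β ∈ Set.Ioo 0 π)
    (c : ℝ) (hc : c ∈ Set.Ioc (0 : ℝ) 1)
    (g : ℝ → ℝ → ℝ)
    (hg : ∀ ε b : ℝ, g ε b =
      if b ≤ ε * Real.sin β then ε - b * Real.tan (β / 2)
      else b * (Real.cos β / Real.sin β))
    (T : ℝ → Set (EuclideanSpace ℝ (Fin N)))
    (hT : ∀ ε, T ε = {x | g ε (Real.sqrt (‖x‖ ^ 2 - (x ⟨0, by omega⟩) ^ 2)) < x ⟨0, by omega⟩ ∧ ‖x‖ < 1}) :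
    ∃ ε₀ > 0, ∀ ε : ℝ, 0 < ε → ε < ε₀ →
      volume (T 0 \ T (c * ε)) = ENNReal.ofReal (c ^ N) * volume (T 0 \ T ε) := by
  obtain ⟨hc₀, hc₁⟩ := hc
  have hT_inter : ∀ ε, T ε = profileRegion β ⟨0, by omega⟩ ε ∩ ball 0 1 := fun ε ↦ by
    ext x
    rw [hT, mem_inter_iff, mem_ball_zero_iff]
    simp only [hg]
    rfl
  refine ⟨1 / 2, by norm_num, fun ε hε hε₁ ↦ ?_⟩
  have hcε : c * ε ≤ 1 / 2 := by nlinarith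
  rw [hT_inter, hT_inter, hT_inter, profileRegion_zero_diff_inter_ball hβ hε hε₁.le,
    profileRegion_zero_diff_inter_ball hβ (by positivity) hcε,
    profileRegion_zero_diff_mul hc₀,
    Measure.addHaar_smul_of_nonneg volume hc₀.le, finrank_euclideanSpace_fin]
end

section
/- Let ν > 1/2 and let λ* > 0 satisfy J_ν(√λ*) = 0 with Y_ν(√λ*) ≠ 0. Then there exist ε₀ > 0 and a C¹ function λ : [0, ε₀) → ℝ with λ(0) = λ*, such that for each ε ∈ (0, ε₀), λ(ε) solves the cross-product equation J_ν(√λ) Y_ν(ε√λ) − Y_ν(√λ) J_ν(ε√λ) = 0, and λ(ε) = λ* + (π² λ*^{ν+1} Y_ν(√λ*)² / (ν 4^ν Γ(ν)²)) ε^{2ν} + o(ε^{2ν}) as ε → 0⁺. -/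
/-!
Near `t = 0` we have `J(t) ~ (t/2)^ν / Γ(ν+1)` and `Y(t) ~ -(Γ(ν)/π) (2/t)^ν`, while the
Wronskian gives `(J/Y)' = -2 / (π t Y²)`. In the variable `s = t^{2ν}` the quotient `J/Y`
therefore tends to `0` and its derivative tends to `L = -π / (ν 4^ν Γ(ν)²)`; continued by
`L s` for `s ≤ 0` it becomes a `C¹` function `H` with `H 0 = 0`, `H' 0 = L ≠ 0`.

Since `(ε √λ)^{2ν} = δ λ^ν` with `δ = ε^{2ν}`, the cross-product equation reads
`g λ = H (δ λ^ν)` for `g λ = J(√λ)/Y(√λ)`, i.e. `H⁻¹ (g λ) / λ^ν = δ`. As `g λ* = 0` and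
`g' λ* = -1 / (π λ* Y(√λ*)²) ≠ 0`, the inverse function theorem solves this for a `C¹`
branch `λ(δ)` whose slope at `δ = 0` is the coefficient of `ε^{2ν}`; composing with
`ε ↦ ε^{2ν}` keeps it `C¹` because `2ν > 1`.
-/

open Real Filter Topology Set

noncomputable def linearLeftExtension (f : ℝ → ℝ) (L s : ℝ) : ℝ := if 0 < s then f s else L * s

section LinearLeftExtension

variable {f : ℝ → ℝ} {L : ℝ}

lemma linearLeftExtension_of_pos {s : ℝ} (hs : 0 < s) : linearLeftExtension f L s = f s :=
  if_pos hs

lemma linearLeftExtension_of_nonpos {s : ℝ} (hs : s ≤ 0) :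
    linearLeftExtension f L s = L * s :=
  if_neg hs.not_gt

lemma linearLeftExtension_eventuallyEq_of_pos {s : ℝ} (hs : 0 < s) :
    linearLeftExtension f L =ᶠ[𝓝 s] f :=
  (eventually_gt_nhds hs).mono fun _ => linearLeftExtension_of_pos

lemma linearLeftExtension_eventuallyEq_of_neg {s : ℝ} (hs : s < 0) :
    linearLeftExtension f L =ᶠ[𝓝 s] (L * ·) :=
  (eventually_lt_nhds hs).mono fun _ hx => linearLeftExtension_of_nonpos hx.le

lemma hasDerivAt_linearLeftExtension (hf : ∀ᶠ s in 𝓝[>] 0, DifferentiableAt ℝ f s)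
    (hf0 : Tendsto f (𝓝[>] 0) (𝓝 0)) (hf' : Tendsto (deriv f) (𝓝[>] 0) (𝓝 L)) :
    HasDerivAt (linearLeftExtension f L) L 0 := by
  have hleft : HasDerivWithinAt (linearLeftExtension f L) L (Iic 0) 0 := by
    have hlin : HasDerivAt (L * ·) L 0 := by simpa using (hasDerivAt_id (0 : ℝ)).const_mul L
    exact hlin.hasDerivWithinAt.congr (fun s hs => linearLeftExtension_of_nonpos hs)
      (linearLeftExtension_of_nonpos le_rfl)
  have hright : HasDerivWithinAt (linearLeftExtension f L) L (Ici 0) 0 := by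
    have hs : {s : ℝ | 0 < s ∧ DifferentiableAt ℝ f s} ∈ 𝓝[>] 0 :=
      (eventually_mem_nhdsWithin (s := Ioi 0)).and hf
    refine hasDerivWithinAt_Ici_of_tendsto_deriv (fun s hs => ?_) ?_ hs ?_
    · exact ((linearLeftExtension_eventuallyEq_of_pos hs.1).differentiableAt_iff.2
        hs.2).differentiableWithinAt
    · rw [ContinuousWithinAt, linearLeftExtension_of_nonpos le_rfl, mul_zero]
      refine (hf0.mono_left (nhdsWithin_mono _ fun s hs => hs.1)).congr' ?_
      filter_upwards [self_mem_nhdsWithin] with s hs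
      exact (linearLeftExtension_of_pos hs.1).symm
    · refine hf'.congr' ?_
      filter_upwards [self_mem_nhdsWithin] with s hs
      exact (linearLeftExtension_eventuallyEq_of_pos hs).deriv_eq.symm
  simpa using hleft.union hright

lemma contDiffAt_one_of_eventually_continuousAt_deriv {g : ℝ → ℝ} {a : ℝ}
    (hd : ∀ᶠ x in 𝓝 a, DifferentiableAt ℝ g x) (hc : ∀ᶠ x in 𝓝 a, ContinuousAt (deriv g) x) :
    ContDiffAt ℝ 1 g a := by
  obtain ⟨U, hU, hUopen, haU⟩ := eventually_nhds_iff.1 (hd.and hc)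
  refine ContDiffOn.contDiffAt ?_ (hUopen.mem_nhds haU)
  rw [show (1 : WithTop ℕ∞) = 0 + 1 from rfl, contDiffOn_succ_iff_deriv_of_isOpen hUopen]
  exact ⟨fun x hx => (hU x hx).1.differentiableWithinAt, by simp,
    contDiffOn_zero.2 fun x hx => (hU x hx).2.continuousWithinAt⟩

lemma deriv_linearLeftExtension_of_nonpos (h0 : HasDerivAt (linearLeftExtension f L) L 0)
    {s : ℝ} (hs : s ≤ 0) : deriv (linearLeftExtension f L) s = L := by
  rcases hs.lt_or_eq with hs | rfl
  · rw [(linearLeftExtension_eventuallyEq_of_neg hs).deriv_eq]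
    simp
  · exact h0.deriv

lemma contDiffAt_linearLeftExtension (hf : ∀ᶠ s in 𝓝[>] 0, ContDiffAt ℝ 1 f s)
    (hf0 : Tendsto f (𝓝[>] 0) (𝓝 0)) (hf' : Tendsto (deriv f) (𝓝[>] 0) (𝓝 L)) :
    ContDiffAt ℝ 1 (linearLeftExtension f L) 0 := by
  have h0 := hasDerivAt_linearLeftExtension
    (hf.mono fun s hs => hs.differentiableAt one_ne_zero) hf0 hf'
  obtain ⟨r, hr, hfr⟩ := mem_nhdsGT_iff_exists_Ioo_subset.1 hf
  have hcont0 : ContinuousAt (deriv (linearLeftExtension f L)) 0 := by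
    rw [ContinuousAt, deriv_linearLeftExtension_of_nonpos h0 le_rfl, ← nhdsLE_sup_nhdsGT,
      tendsto_sup]
    refine ⟨tendsto_const_nhds.congr' ?_, hf'.congr' ?_⟩
    · filter_upwards [self_mem_nhdsWithin] with s hs
      exact (deriv_linearLeftExtension_of_nonpos h0 hs).symm
    · filter_upwards [self_mem_nhdsWithin] with s hs
      exact (linearLeftExtension_eventuallyEq_of_pos hs).deriv_eq.symm
  apply contDiffAt_one_of_eventually_continuousAt_deriv
  all_goals
    filter_upwards [Ioo_mem_nhds (neg_neg_of_pos hr) hr] with s hs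
    rcases lt_trichotomy s 0 with hneg | rfl | hpos
  · exact ((linearLeftExtension_eventuallyEq_of_neg hneg).differentiableAt_iff.2
      (differentiableAt_id.const_mul L))
  · exact h0.differentiableAt
  · exact (linearLeftExtension_eventuallyEq_of_pos hpos).differentiableAt_iff.2
      (ContDiffAt.differentiableAt (n := 1) (hfr ⟨hpos, hs.2⟩) one_ne_zero)
  · refine (continuousAt_const (y := L)).congr ?_
    filter_upwards [Iio_mem_nhds hneg] with x hx
    exact (deriv_linearLeftExtension_of_nonpos h0 hx.le).symm
  · exact hcont0
  · have hfs : ContDiffAt ℝ 1 f s := hfr ⟨hpos, hs.2⟩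
    obtain ⟨u, hu, hfu⟩ := hfs.contDiffOn le_rfl (by norm_num)
    have hcont : ContinuousAt (deriv f) s :=
      ((hfu.mono interior_subset).continuousOn_deriv_of_isOpen isOpen_interior le_rfl).continuousAt
        (interior_mem_nhds.2 hu)
    exact hcont.congr (linearLeftExtension_eventuallyEq_of_pos hpos).deriv.symm

end LinearLeftExtension

lemma exists_localInverse_of_contDiffAt {f : ℝ → ℝ} {a f' : ℝ} (hf : ContDiffAt ℝ 1 f a)
    (hf' : HasDerivAt f f' a) (h0 : f' ≠ 0) :
    ∃ g : ℝ → ℝ, ContDiffAt ℝ 1 g (f a) ∧ g (f a) = a ∧ HasDerivAt g f'⁻¹ (f a) ∧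
      ∀ᶠ y in 𝓝 (f a), f (g y) = y := by
  have hF := hf'.hasFDerivAt_equiv h0
  have hgC1 := hf.to_localInverse hF one_ne_zero
  have hga := hf.localInverse_apply_image hF one_ne_zero
  have hright := (hf.hasStrictFDerivAt' hF one_ne_zero).eventually_right_inverse
  refine ⟨_, hgC1, hga, ?_, hright⟩
  exact HasDerivAt.of_local_left_inverse hgC1.continuousAt (by rwa [hga]) h0 hright

lemma exists_branch_eq_comp_mul_rpow {H g : ℝ → ℝ} {L g' x₀ ν : ℝ} (hx₀ : 0 < x₀)
    (hH : ContDiffAt ℝ 1 H 0) (hH0 : H 0 = 0) (hH' : HasDerivAt H L 0) (hL : L ≠ 0)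
    (hg : ContDiffAt ℝ 1 g x₀) (hg0 : g x₀ = 0) (hg' : HasDerivAt g g' x₀) (hg'0 : g' ≠ 0) :
    ∃ Λ : ℝ → ℝ, ContDiffAt ℝ 1 Λ 0 ∧ Λ 0 = x₀ ∧ HasDerivAt Λ (L * x₀ ^ ν / g') 0 ∧
      ∀ᶠ δ in 𝓝 0, 0 < Λ δ ∧ g (Λ δ) = H (δ * Λ δ ^ ν) := by
  obtain ⟨K, hKC1, hK0, hK', hHK⟩ := exists_localInverse_of_contDiffAt hH hH' hL
  rw [hH0] at hKC1 hK0 hK' hHK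
  rw [← hg0] at hKC1 hK'
  have hx₀ν : x₀ ^ ν ≠ 0 := (rpow_pos_of_pos hx₀ ν).ne'
  set Φ : ℝ → ℝ := fun x => K (g x) / x ^ ν
  have hΦ0 : Φ x₀ = 0 := by simp [Φ, hg0, hK0]
  have hΦC1 : ContDiffAt ℝ 1 Φ x₀ :=
    (hKC1.comp x₀ hg).div (contDiffAt_rpow_const_of_ne hx₀.ne') hx₀ν
  have hΦ' : HasDerivAt Φ (L⁻¹ * g' / x₀ ^ ν) x₀ := by
    refine ((hK'.comp x₀ hg').div (hasDerivAt_rpow_const (Or.inl hx₀.ne')) hx₀ν).congr_deriv ?_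
    simp only [Function.comp_apply, hg0, hK0]
    field_simp
    ring
  obtain ⟨Λ, hΛC1, hΛ0, hΛ', hΦΛ⟩ :=
    exists_localInverse_of_contDiffAt hΦC1 hΦ' (by simp [hL, hg'0, hx₀ν])
  rw [hΦ0] at hΛC1 hΛ0 hΛ' hΦΛ
  refine ⟨Λ, hΛC1, hΛ0, by convert hΛ' using 1; field_simp, ?_⟩
  have hΛ_lim : Tendsto Λ (𝓝 0) (𝓝 x₀) := hΛ0 ▸ hΛC1.continuousAt.tendsto
  have hgΛ_lim : Tendsto (fun δ => g (Λ δ)) (𝓝 0) (𝓝 (g x₀)) :=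
    hg.continuousAt.tendsto.comp hΛ_lim
  rw [hg0] at hgΛ_lim
  filter_upwards [hΛ_lim.eventually (eventually_gt_nhds hx₀), hgΛ_lim.eventually hHK, hΦΛ]
    with δ hpos hHKδ hΦδ
  refine ⟨hpos, ?_⟩
  rw [← (div_eq_iff (rpow_pos_of_pos hpos ν).ne').1 hΦδ, hHKδ]

lemma exists_contDiffOn_Ico_comp_rpow {Λ : ℝ → ℝ} {p : ℝ} (hp : 1 ≤ p)
    (hΛ : ContDiffAt ℝ 1 Λ 0) :
    ∃ ε₀ > 0, ContDiffOn ℝ 1 (fun ε => Λ (ε ^ p)) (Ico 0 ε₀) := by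
  have hq : ContDiff ℝ 1 fun ε : ℝ => ε ^ p := by
    exact_mod_cast contDiff_rpow_const_of_le (n := 1) (by exact_mod_cast hp)
  obtain ⟨u, hu, hΛu⟩ := hΛ.contDiffOn le_rfl (by norm_num)
  have hpre : (fun ε : ℝ => ε ^ p) ⁻¹' u ∈ 𝓝 0 :=
    hq.continuous.continuousAt.preimage_mem_nhds (by rwa [zero_rpow (by linarith)])
  obtain ⟨ε₀, hε₀, hball⟩ := Metric.mem_nhds_iff.1 hpre
  refine ⟨ε₀, hε₀, hΛu.comp hq.contDiffOn fun ε hε => hball ?_⟩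
  rw [Metric.mem_ball, dist_zero_right, norm_of_nonneg hε.1]
  exact hε.2

lemma tendsto_rpow_nhdsGT_zero {p : ℝ} (hp : 0 < p) :
    Tendsto (fun x : ℝ => x ^ p) (𝓝[>] 0) (𝓝[>] 0) := by
  refine tendsto_nhdsWithin_iff.2 ⟨?_, ?_⟩
  · simpa [zero_rpow hp.ne'] using
      (continuousAt_rpow_const 0 p (Or.inr hp.le)).tendsto.mono_left nhdsWithin_le_nhds
  · filter_upwards [self_mem_nhdsWithin] with x hx using rpow_pos_of_pos hx p

lemma HasDerivAt.tendsto_sub_mul_div_comp {Λ q : ℝ → ℝ} {a : ℝ} {l : Filter ℝ}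
    (hΛ : HasDerivAt Λ a 0) (hq : Tendsto q l (𝓝[≠] 0)) :
    Tendsto (fun ε => (Λ (q ε) - Λ 0 - a * q ε) / q ε) l (𝓝 0) := by
  have hslope := (hasDerivAt_iff_tendsto_slope_zero.1 hΛ).sub_const a
  rw [sub_self] at hslope
  refine (hslope.comp hq).congr' ?_
  filter_upwards [hq self_mem_nhdsWithin] with ε (hε : q ε ≠ 0)
  simp only [Function.comp_apply, zero_add, smul_eq_mul]
  field_simp

lemma hasDerivAt_div_of_wronskian {J Y : ℝ → ℝ} {J' Y' t w : ℝ} (hJ : HasDerivAt J J' t)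
    (hY : HasDerivAt Y Y' t) (hYt : Y t ≠ 0) (hw : J t * Y' - J' * Y t = w) :
    HasDerivAt (fun x => J x / Y x) (-w / Y t ^ 2) t :=
  (hJ.div hY hYt).congr_deriv (by rw [← hw]; ring)

lemma eventually_ne_zero_of_tendsto_div {F G : ℝ → ℝ} {l : Filter ℝ}
    (h : Tendsto (fun t => F t / G t) l (𝓝 1)) : ∀ᶠ t in l, F t ≠ 0 :=
  (h.eventually_ne one_ne_zero).mono fun t ht hF => ht (by simp [hF])

section Bessel

variable {ν : ℝ} {J Y : ℝ → ℝ}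

lemma tendsto_div_half_rpow_of_tendsto {c : ℝ} (hc : c ≠ 0)
    (h : Tendsto (fun t => J t / ((t / 2) ^ ν / c)) (𝓝[>] 0) (𝓝 1)) :
    Tendsto (fun t => J t / (t / 2) ^ ν) (𝓝[>] 0) (𝓝 c⁻¹) := by
  refine (one_div c ▸ h.div_const c).congr' ?_
  filter_upwards [self_mem_nhdsWithin] with t (ht : 0 < t)
  have hu : (t / 2) ^ ν ≠ 0 := (rpow_pos_of_pos (by positivity) ν).ne'
  field_simp

lemma tendsto_half_rpow_mul_of_tendsto {c : ℝ} (hc : c ≠ 0)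
    (h : Tendsto (fun t => Y t / (c * (2 / t) ^ ν)) (𝓝[>] 0) (𝓝 1)) :
    Tendsto (fun t => (t / 2) ^ ν * Y t) (𝓝[>] 0) (𝓝 c) := by
  refine (mul_one c ▸ h.const_mul c).congr' ?_
  filter_upwards [self_mem_nhdsWithin] with t (ht : 0 < t)
  have hu : (t / 2) ^ ν ≠ 0 := (rpow_pos_of_pos (by positivity) ν).ne'
  rw [← inv_div t 2, inv_rpow (by positivity)]
  field_simp

lemma rpow_two_mul_mul_sq {t : ℝ} (ht : 0 < t) (y : ℝ) :
    t ^ (2 * ν) * y ^ 2 = 4 ^ ν * ((t / 2) ^ ν * y) ^ 2 := by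
  have h2 : (0 : ℝ) < 2 ^ ν := by positivity
  rw [two_mul, rpow_add ht, div_rpow ht.le zero_le_two, show (4 : ℝ) = 2 * 2 by norm_num,
    mul_rpow zero_le_two zero_le_two]
  field_simp

lemma tendsto_div_nhdsGT_zero_of_asymptotics (hν : 0 < ν)
    (hJasymp : Tendsto (fun t => J t / ((t / 2) ^ ν / Gamma (ν + 1))) (𝓝[>] 0) (𝓝 1))
    (hYasymp : Tendsto (fun t => Y t / (-(Gamma ν / π) * (2 / t) ^ ν)) (𝓝[>] 0) (𝓝 1)) :
    Tendsto (fun t => J t / Y t) (𝓝[>] 0) (𝓝 0) := by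
  have hc : -(Gamma ν / π) ≠ 0 := neg_ne_zero.2 (div_pos (Gamma_pos_of_pos hν) pi_pos).ne'
  have hJ := tendsto_div_half_rpow_of_tendsto (Gamma_pos_of_pos (by linarith)).ne' hJasymp
  have hY := tendsto_half_rpow_mul_of_tendsto hc hYasymp
  have hu : Tendsto (fun t : ℝ => (t / 2) ^ ν) (𝓝[>] 0) (𝓝 0) := by
    refine (((continuous_id.div_const 2).rpow_const fun _ => Or.inr hν.le).tendsto' 0 0
      ?_).mono_left nhdsWithin_le_nhds
    simp [zero_rpow hν.ne']
  have hlim : Tendsto (fun t => J t / (t / 2) ^ ν * ((t / 2) ^ ν * (t / 2) ^ ν) /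
      ((t / 2) ^ ν * Y t)) (𝓝[>] 0) (𝓝 ((Gamma (ν + 1))⁻¹ * (0 * 0) / -(Gamma ν / π))) :=
    (hJ.mul (hu.mul hu)).div hY hc
  rw [mul_zero, mul_zero, zero_div] at hlim
  refine hlim.congr' ?_
  filter_upwards [self_mem_nhdsWithin] with t (ht : 0 < t)
  have hu : (t / 2) ^ ν ≠ 0 := (rpow_pos_of_pos (by positivity) ν).ne'
  rw [← mul_assoc, div_mul_cancel₀ _ hu, mul_comm (J t), mul_div_mul_left _ _ hu]

lemma tendsto_rpow_two_mul_mul_sq (hν : 0 < ν)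
    (hYasymp : Tendsto (fun t => Y t / (-(Gamma ν / π) * (2 / t) ^ ν)) (𝓝[>] 0) (𝓝 1)) :
    Tendsto (fun t => t ^ (2 * ν) * Y t ^ 2) (𝓝[>] 0) (𝓝 (4 ^ ν * (Gamma ν / π) ^ 2)) := by
  have hc : -(Gamma ν / π) ≠ 0 := neg_ne_zero.2 (div_pos (Gamma_pos_of_pos hν) pi_pos).ne'
  have hlim := ((tendsto_half_rpow_mul_of_tendsto hc hYasymp).pow 2).const_mul (4 ^ ν)
  rw [neg_sq] at hlim
  refine hlim.congr' ?_
  filter_upwards [self_mem_nhdsWithin] with t ht using (rpow_two_mul_mul_sq ht (Y t)).symm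

lemma hasDerivAt_div_of_contDiffOn_of_wronskian (hJ : ContDiffOn ℝ 1 J (Ioi 0))
    (hY : ContDiffOn ℝ 1 Y (Ioi 0))
    (hW : ∀ t > (0 : ℝ), J t * deriv Y t - deriv J t * Y t = 2 / (π * t))
    {t : ℝ} (ht : 0 < t) (hYt : Y t ≠ 0) :
    HasDerivAt (fun x => J x / Y x) (-(2 / (π * t)) / Y t ^ 2) t :=
  hasDerivAt_div_of_wronskian
    ((hJ.contDiffAt (Ioi_mem_nhds ht)).differentiableAt one_ne_zero).hasDerivAt
    ((hY.contDiffAt (Ioi_mem_nhds ht)).differentiableAt one_ne_zero).hasDerivAt hYt (hW t ht)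

lemma hasDerivAt_div_comp_rpow (hJ : ContDiffOn ℝ 1 J (Ioi 0)) (hY : ContDiffOn ℝ 1 Y (Ioi 0))
    (hW : ∀ t > (0 : ℝ), J t * deriv Y t - deriv J t * Y t = 2 / (π * t))
    {e : ℝ} (h2e : 2 * ν * e = 1) {s : ℝ} (hs : 0 < s) (hYs : Y (s ^ e) ≠ 0) :
    HasDerivAt (fun s => J (s ^ e) / Y (s ^ e)) (-1 / (π * ν * (s * Y (s ^ e) ^ 2))) s := by
  refine ((hasDerivAt_div_of_contDiffOn_of_wronskian hJ hY hW (rpow_pos_of_pos hs e) hYs).comp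
    s (hasDerivAt_rpow_const (Or.inl hs.ne'))).congr_deriv ?_
  have : s ^ e ≠ 0 := (rpow_pos_of_pos hs e).ne'
  have : ν ≠ 0 := by rintro rfl; simp at h2e
  rw [rpow_sub_one hs.ne']
  field_simp
  linear_combination -h2e

lemma exists_contDiffAt_eq_div_comp_rpow (hν : 0 < ν) (hJ : ContDiffOn ℝ 1 J (Ioi 0))
    (hY : ContDiffOn ℝ 1 Y (Ioi 0))
    (hJasymp : Tendsto (fun t => J t / ((t / 2) ^ ν / Gamma (ν + 1))) (𝓝[>] 0) (𝓝 1))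
    (hYasymp : Tendsto (fun t => Y t / (-(Gamma ν / π) * (2 / t) ^ ν)) (𝓝[>] 0) (𝓝 1))
    (hW : ∀ t > (0 : ℝ), J t * deriv Y t - deriv J t * Y t = 2 / (π * t)) :
    ∃ H : ℝ → ℝ, ContDiffAt ℝ 1 H 0 ∧ H 0 = 0 ∧
      HasDerivAt H (-(π / (ν * 4 ^ ν * Gamma ν ^ 2))) 0 ∧
      ∀ᶠ t in 𝓝[>] 0, Y t ≠ 0 ∧ H (t ^ (2 * ν)) = J t / Y t := by
  obtain ⟨e, he, h2e⟩ : ∃ e : ℝ, 0 < e ∧ 2 * ν * e = 1 :=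
    ⟨(2 * ν)⁻¹, by positivity, mul_inv_cancel₀ (by positivity)⟩
  set f : ℝ → ℝ := fun s => J (s ^ e) / Y (s ^ e)
  have hYne : ∀ᶠ t in 𝓝[>] 0, Y t ≠ 0 := eventually_ne_zero_of_tendsto_div hYasymp
  have hp := tendsto_rpow_nhdsGT_zero he
  have hgood : ∀ᶠ s in 𝓝[>] 0, 0 < s ∧ Y (s ^ e) ≠ 0 :=
    eventually_mem_nhdsWithin.and (hp.eventually hYne)
  have hC1 : ∀ᶠ s in 𝓝[>] 0, ContDiffAt ℝ 1 f s := by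
    filter_upwards [hgood] with s ⟨hs, hYs⟩
    have ht : Ioi 0 ∈ 𝓝 (s ^ e) := Ioi_mem_nhds (rpow_pos_of_pos hs e)
    have hpow : ContDiffAt ℝ 1 (fun x : ℝ => x ^ e) s := contDiffAt_rpow_const_of_ne hs.ne'
    exact ((hJ.contDiffAt ht).comp s hpow).div ((hY.contDiffAt ht).comp s hpow) hYs
  have hderiv : Tendsto (deriv f) (𝓝[>] 0) (𝓝 (-(π / (ν * 4 ^ ν * Gamma ν ^ 2)))) := by
    have hsY : Tendsto (fun s => s * Y (s ^ e) ^ 2) (𝓝[>] 0) (𝓝 (4 ^ ν * (Gamma ν / π) ^ 2)) := by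
      refine ((tendsto_rpow_two_mul_mul_sq hν hYasymp).comp hp).congr' ?_
      filter_upwards [self_mem_nhdsWithin] with s (hs : 0 < s)
      rw [Function.comp_apply, ← rpow_mul hs.le, mul_comm e, h2e, rpow_one, mul_comm]
    have hΓ := Gamma_pos_of_pos hν
    have hlim := tendsto_const_nhds (x := (-1 : ℝ)).div (hsY.const_mul (π * ν)) (by positivity)
    convert hlim.congr' ?_ using 2
    · field_simp
    · filter_upwards [hgood] with s ⟨hs, hYs⟩
      exact (hasDerivAt_div_comp_rpow hJ hY hW h2e hs hYs).deriv.symm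
  refine ⟨linearLeftExtension f _, contDiffAt_linearLeftExtension hC1 ?_ hderiv,
    (linearLeftExtension_of_nonpos le_rfl).trans (mul_zero _),
    hasDerivAt_linearLeftExtension (hC1.mono fun s hs => hs.differentiableAt one_ne_zero) ?_ hderiv,
    ?_⟩
  any_goals exact (tendsto_div_nhdsGT_zero_of_asymptotics hν hJasymp hYasymp).comp hp
  filter_upwards [self_mem_nhdsWithin, hYne] with t (ht : 0 < t) hYt
  refine ⟨hYt, ?_⟩
  rw [linearLeftExtension_of_pos (rpow_pos_of_pos ht _)]
  simp only [f, ← rpow_mul ht.le, h2e, rpow_one]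

lemma hasDerivAt_div_comp_sqrt (hJ : ContDiffOn ℝ 1 J (Ioi 0)) (hY : ContDiffOn ℝ 1 Y (Ioi 0))
    (hW : ∀ t > (0 : ℝ), J t * deriv Y t - deriv J t * Y t = 2 / (π * t))
    {x : ℝ} (hx : 0 < x) (hYx : Y √x ≠ 0) :
    HasDerivAt (fun x => J √x / Y √x) (-1 / (π * x * Y √x ^ 2)) x := by
  refine ((hasDerivAt_div_of_contDiffOn_of_wronskian hJ hY hW (sqrt_pos.2 hx) hYx).comp x
    (hasDerivAt_sqrt hx.ne')).congr_deriv ?_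
  have hs := sqrt_pos.2 hx
  field_simp
  rw [sq_sqrt hx.le]

lemma eventually_cross_eq_of_eq_div_comp {H Λ : ℝ → ℝ} {x₀ : ℝ} (hν : 0 < ν)
    (hY : ContinuousAt Y √x₀) (hYz : Y √x₀ ≠ 0) (hΛ : Tendsto Λ (𝓝 0) (𝓝 x₀))
    (hHeq : ∀ᶠ t in 𝓝[>] 0, Y t ≠ 0 ∧ H (t ^ (2 * ν)) = J t / Y t)
    (hΛeq : ∀ᶠ δ in 𝓝 0, 0 < Λ δ ∧ J √(Λ δ) / Y √(Λ δ) = H (δ * Λ δ ^ ν)) :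
    ∀ᶠ ε in 𝓝[>] 0, J √(Λ (ε ^ (2 * ν))) * Y (ε * √(Λ (ε ^ (2 * ν)))) -
      Y √(Λ (ε ^ (2 * ν))) * J (ε * √(Λ (ε ^ (2 * ν)))) = 0 := by
  have hq := tendsto_rpow_nhdsGT_zero (p := 2 * ν) (by positivity)
  have hq0 := hq.mono_right nhdsWithin_le_nhds
  have hΛq : Tendsto (fun ε => Λ (ε ^ (2 * ν))) (𝓝[>] 0) (𝓝 x₀) := hΛ.comp hq0
  have hεs : Tendsto (fun ε => ε * √(Λ (ε ^ (2 * ν)))) (𝓝[>] 0) (𝓝[>] 0) := by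
    refine tendsto_nhdsWithin_iff.2 ⟨?_, ?_⟩
    · simpa using (tendsto_nhdsWithin_of_tendsto_nhds tendsto_id).mul
        ((continuous_sqrt.tendsto x₀).comp hΛq)
    · filter_upwards [self_mem_nhdsWithin, hq0.eventually hΛeq] with ε (hε : 0 < ε) hΛε
      exact mul_pos hε (sqrt_pos.2 hΛε.1)
  have hYs : ∀ᶠ ε in 𝓝[>] 0, Y √(Λ (ε ^ (2 * ν))) ≠ 0 :=
    ((hY.tendsto.comp (continuous_sqrt.tendsto x₀)).comp hΛq).eventually_ne hYz
  filter_upwards [self_mem_nhdsWithin, hq0.eventually hΛeq, hεs.eventually hHeq, hYs]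
    with ε (hε : 0 < ε) ⟨hpos, hsol⟩ ⟨hYε, hHε⟩ hYsε
  have hpow : (ε * √(Λ (ε ^ (2 * ν)))) ^ (2 * ν) = ε ^ (2 * ν) * Λ (ε ^ (2 * ν)) ^ ν := by
    rw [mul_rpow hε.le (sqrt_nonneg _), sqrt_eq_rpow, ← rpow_mul hpos.le]
    ring_nf
  rw [hpow, ← hsol, div_eq_div_iff hYsε hYε] at hHε
  linarith

lemma exists_cross_product_branch (hν : 0 < ν) (hJ : ContDiffOn ℝ 1 J (Ioi 0))
    (hY : ContDiffOn ℝ 1 Y (Ioi 0))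
    (hJasymp : Tendsto (fun t => J t / ((t / 2) ^ ν / Gamma (ν + 1))) (𝓝[>] 0) (𝓝 1))
    (hYasymp : Tendsto (fun t => Y t / (-(Gamma ν / π) * (2 / t) ^ ν)) (𝓝[>] 0) (𝓝 1))
    (hW : ∀ t > (0 : ℝ), J t * deriv Y t - deriv J t * Y t = 2 / (π * t))
    {x₀ : ℝ} (hx₀ : 0 < x₀) (hJz : J √x₀ = 0) (hYz : Y √x₀ ≠ 0) :
    ∃ Λ : ℝ → ℝ, ContDiffAt ℝ 1 Λ 0 ∧ Λ 0 = x₀ ∧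
      HasDerivAt Λ (π ^ 2 * x₀ ^ (ν + 1) * Y √x₀ ^ 2 / (ν * 4 ^ ν * Gamma ν ^ 2)) 0 ∧
      ∀ᶠ ε in 𝓝[>] 0, J √(Λ (ε ^ (2 * ν))) * Y (ε * √(Λ (ε ^ (2 * ν)))) -
        Y √(Λ (ε ^ (2 * ν))) * J (ε * √(Λ (ε ^ (2 * ν)))) = 0 := by
  obtain ⟨H, hHC1, hH0, hH', hHeq⟩ :=
    exists_contDiffAt_eq_div_comp_rpow hν hJ hY hJasymp hYasymp hW
  have hs₀ : 0 < √x₀ := sqrt_pos.2 hx₀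
  have hΓ := Gamma_pos_of_pos hν
  have hsqrt : ContDiffAt ℝ 1 (fun x : ℝ => √x) x₀ := contDiffAt_sqrt hx₀.ne'
  have hg : ContDiffAt ℝ 1 (fun x => J √x / Y √x) x₀ :=
    ((hJ.contDiffAt (Ioi_mem_nhds hs₀)).comp x₀ hsqrt).div
      ((hY.contDiffAt (Ioi_mem_nhds hs₀)).comp x₀ hsqrt) hYz
  obtain ⟨Λ, hΛC1, hΛ0, hΛ', hΛeq⟩ := exists_branch_eq_comp_mul_rpow (ν := ν) hx₀ hHC1 hH0 hH'
    (by simp [pi_ne_zero, hν.ne', hΓ.ne']) hg (by simp [hJz])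
    (hasDerivAt_div_comp_sqrt hJ hY hW hx₀ hYz) (by simp [pi_ne_zero, hx₀.ne', hYz])
  refine ⟨Λ, hΛC1, hΛ0, hΛ'.congr_deriv ?_, ?_⟩
  · rw [rpow_add_one hx₀.ne']
    field_simp
  exact eventually_cross_eq_of_eq_div_comp hν (hY.continuousOn.continuousAt (Ioi_mem_nhds hs₀))
    hYz (hΛ0 ▸ hΛC1.continuousAt.tendsto) hHeq hΛeq

end Bessel

theorem cross_product_branch_general (ν : ℝ) (hν : 1 / 2 < ν) (J Y : ℝ → ℝ)
    (hJsmooth : ContDiffOn ℝ 2 J (Set.Ioi 0)) (hYsmooth : ContDiffOn ℝ 2 Y (Set.Ioi 0))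
    (hJasymp : Tendsto (fun t => J t / ((t / 2) ^ ν / Real.Gamma (ν + 1)))
      (nhdsWithin 0 (Set.Ioi 0)) (nhds 1))
    (hYasymp : Tendsto (fun t => Y t / (-(Real.Gamma ν / π) * (2 / t) ^ ν))
      (nhdsWithin 0 (Set.Ioi 0)) (nhds 1))
    (hW : ∀ t > (0 : ℝ), J t * deriv Y t - deriv J t * Y t = 2 / (π * t))
    (lamStar : ℝ) (hlam : 0 < lamStar)
    (hJz : J (Real.sqrt lamStar) = 0) (hYz : Y (Real.sqrt lamStar) ≠ 0) :
    ∃ ε₀ > (0 : ℝ), ∃ lam : ℝ → ℝ,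
      ContDiffOn ℝ 1 lam (Set.Ico 0 ε₀) ∧ lam 0 = lamStar ∧
      (∀ ε ∈ Set.Ioo (0 : ℝ) ε₀,
        J (Real.sqrt (lam ε)) * Y (ε * Real.sqrt (lam ε)) -
          Y (Real.sqrt (lam ε)) * J (ε * Real.sqrt (lam ε)) = 0) ∧
      Tendsto (fun ε =>
          (lam ε - lamStar -
            (π ^ 2 * lamStar ^ (ν + 1) * (Y (Real.sqrt lamStar)) ^ 2 /
              (ν * 4 ^ ν * (Real.Gamma ν) ^ 2)) * ε ^ (2 * ν)) / ε ^ (2 * ν))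
        (nhdsWithin 0 (Set.Ioi 0)) (nhds 0) := by
  have hν0 : 0 < ν := by linarith
  obtain ⟨Λ, hΛC1, hΛ0, hΛ', hΛeq⟩ := exists_cross_product_branch hν0
    (hJsmooth.of_le one_le_two) (hYsmooth.of_le one_le_two) hJasymp hYasymp hW hlam hJz hYz
  obtain ⟨ε₁, hε₁, hC1⟩ := exists_contDiffOn_Ico_comp_rpow (p := 2 * ν) (by linarith) hΛC1
  obtain ⟨ε₂, hε₂, hsol⟩ := mem_nhdsGT_iff_exists_Ioo_subset.1 hΛeq
  refine ⟨min ε₁ ε₂, lt_min hε₁ hε₂, fun ε => Λ (ε ^ (2 * ν)),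
    hC1.mono (Ico_subset_Ico_right (min_le_left _ _)), by simp [hΛ0, zero_rpow, hν0.ne'],
    fun ε hε => hsol (Ioo_subset_Ioo_right (min_le_right _ _) hε), ?_⟩
  have hq := (tendsto_rpow_nhdsGT_zero (p := 2 * ν) (by positivity)).mono_right
    (nhdsGT_le_nhdsNE 0)
  simpa only [hΛ0] using hΛ'.tendsto_sub_mul_div_comp hq

/-- perturbation of a zero of `J_ν` into a branch of solutions of the
cross-product equation. If `J_ν(√λ*) = 0` and `Y_ν(√λ*) ≠ 0`, there is a `C¹`
branch `λ(ε)` with `λ(0) = λ*`, solving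
`J_ν(√λ) Y_ν(ε√λ) - Y_ν(√λ) J_ν(ε√λ) = 0` for `ε ∈ (0, ε₀)`, and
`λ(ε) = λ* + a ε^{2ν} + o(ε^{2ν})` with
`a = π² λ*^{ν+1} Y_ν(√λ*)² / (ν 4^ν Γ(ν)²)`. Here `J` and `Y` are the Bessel
functions of order `ν`, characterized by the Bessel ODE, the small-argument
asymptotics and the Wronskian identity. -/
theorem cross_product_branch (ν : ℝ) (hν : 1 / 2 < ν) (J Y : ℝ → ℝ)
    (hJsmooth : ContDiffOn ℝ 2 J (Set.Ioi 0)) (hYsmooth : ContDiffOn ℝ 2 Y (Set.Ioi 0))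
    (hJode : ∀ t > (0 : ℝ),
      t ^ 2 * deriv (deriv J) t + t * deriv J t + (t ^ 2 - ν ^ 2) * J t = 0)
    (hYode : ∀ t > (0 : ℝ),
      t ^ 2 * deriv (deriv Y) t + t * deriv Y t + (t ^ 2 - ν ^ 2) * Y t = 0)
    (hJasymp : Tendsto (fun t => J t / ((t / 2) ^ ν / Real.Gamma (ν + 1)))
      (nhdsWithin 0 (Set.Ioi 0)) (nhds 1))
    (hYasymp : Tendsto (fun t => Y t / (-(Real.Gamma ν / π) * (2 / t) ^ ν))
      (nhdsWithin 0 (Set.Ioi 0)) (nhds 1))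
    (hW : ∀ t > (0 : ℝ), J t * deriv Y t - deriv J t * Y t = 2 / (π * t))
    (lamStar : ℝ) (hlam : 0 < lamStar)
    (hJz : J (Real.sqrt lamStar) = 0) (hYz : Y (Real.sqrt lamStar) ≠ 0) :
    ∃ ε₀ > (0 : ℝ), ∃ lam : ℝ → ℝ,
      ContDiffOn ℝ 1 lam (Set.Ico 0 ε₀) ∧ lam 0 = lamStar ∧
      (∀ ε ∈ Set.Ioo (0 : ℝ) ε₀,
        J (Real.sqrt (lam ε)) * Y (ε * Real.sqrt (lam ε)) -
          Y (Real.sqrt (lam ε)) * J (ε * Real.sqrt (lam ε)) = 0) ∧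
      Tendsto (fun ε =>
          (lam ε - lamStar -
            (π ^ 2 * lamStar ^ (ν + 1) * (Y (Real.sqrt lamStar)) ^ 2 /
              (ν * 4 ^ ν * (Real.Gamma ν) ^ 2)) * ε ^ (2 * ν)) / ε ^ (2 * ν))
        (nhdsWithin 0 (Set.Ioi 0)) (nhds 0) :=
  cross_product_branch_general ν hν J Y hJsmooth hYsmooth hJasymp hYasymp hW lamStar hlam hJz hYz
end

section
/- Let λ* > 0 with J_ν(√λ*) = 0, Y_ν(√λ*) ≠ 0, ν > 1/2. For the function G(δ, λ) = J_ν(√λ)/Y_ν(√λ) − J_ν(δ^{1/(2ν)}√λ)/Y_ν(δ^{1/(2ν)}√λ) (extended continuously to δ = 0 by G(0,λ) = J_ν(√λ)/Y_ν(√λ)), the partial derivatives at (0, λ*) are ∂G/∂λ = −1/(π λ* Y_ν(√λ*)²) and ∂G/∂δ = (π/(ν Γ(ν)²)) (λ*/4)^ν. -/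
/-!
The `λ`-derivative is the chain rule for `J/Y ∘ √·`. For the `δ`-derivative, the two
small-argument asymptotics give `J t / Y t ~ -(π / (ν Γ(ν)²)) (t/2)^(2ν)` as `t → 0⁺`, and
at `t = δ^(1/(2ν)) √λ*` the right-hand side is exactly linear in `δ`, namely
`-(π / (ν Γ(ν)²)) (λ*/4)^ν δ`. Since `J(√λ*) = 0`, the difference quotient of `G(·, λ*)` at
`0` is `-(J t / Y t) / δ`, which therefore tends to the claimed value.
-/

open Real Filter Topology

lemma leading_term_ratio {ν t : ℝ} (hν : 0 < ν) (ht : 0 < t) :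
    ((t / 2) ^ ν / Gamma (ν + 1)) / (-(Gamma ν / π) * (2 / t) ^ ν) =
      -(π / (ν * Gamma ν ^ 2)) * (t / 2) ^ (2 * ν) := by
  have hΓ : 0 < Gamma ν := Gamma_pos_of_pos hν
  have hs : 0 < (t / 2) ^ ν := rpow_pos_of_pos (by positivity) ν
  rw [Gamma_add_one hν.ne', mul_comm 2 ν, rpow_mul (by positivity), rpow_two,
    show 2 / t = (t / 2)⁻¹ by rw [inv_div], inv_rpow (by positivity)]
  field_simp

lemma tendsto_ratio_div_rpow_of_asymp {ν : ℝ} {J Y : ℝ → ℝ} (hν : 0 < ν)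
    (hJ : Tendsto (fun t => J t / ((t / 2) ^ ν / Gamma (ν + 1))) (𝓝[>] 0) (𝓝 1))
    (hY : Tendsto (fun t => Y t / (-(Gamma ν / π) * (2 / t) ^ ν)) (𝓝[>] 0) (𝓝 1)) :
    Tendsto (fun t => J t / Y t / (t / 2) ^ (2 * ν)) (𝓝[>] 0)
      (𝓝 (-(π / (ν * Gamma ν ^ 2)))) := by
  have hK : π / (ν * Gamma ν ^ 2) ≠ 0 := by have := Gamma_pos_of_pos hν; positivity
  have hlim := (hJ.div hY one_ne_zero).mul_const (-(π / (ν * Gamma ν ^ 2)))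
  rw [div_one, one_mul] at hlim
  refine hlim.congr' ?_
  filter_upwards [self_mem_nhdsWithin] with t (ht : 0 < t)
  have hs : (t / 2) ^ (2 * ν) ≠ 0 := (rpow_pos_of_pos (by positivity) _).ne'
  rw [Pi.div_apply, div_div_div_comm, leading_term_ratio hν ht]
  field_simp

lemma tendsto_rpow_mul_nhdsGT_zero {p c : ℝ} (hp : 0 < p) (hc : 0 < c) :
    Tendsto (fun δ : ℝ => δ ^ p * c) (𝓝[>] 0) (𝓝[>] 0) := by
  refine tendsto_nhdsWithin_of_tendsto_nhds_of_eventually_within _ ?_ ?_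
  · have h := ((continuousAt_rpow_const 0 p (Or.inr hp.le)).tendsto.mul_const c).mono_left
      (nhdsWithin_le_nhds (s := Set.Ioi 0))
    rwa [zero_rpow hp.ne', zero_mul] at h
  · filter_upwards [self_mem_nhdsWithin] with δ (hδ : 0 < δ)
    exact mul_pos (rpow_pos_of_pos hδ p) hc

lemma rpow_mul_div_two_rpow {δ c ν : ℝ} (hδ : 0 ≤ δ) (hc : 0 ≤ c) (hν : 0 < ν) :
    (δ ^ (1 / (2 * ν)) * c / 2) ^ (2 * ν) = δ * (c ^ 2 / 4) ^ ν := by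
  rw [mul_div_assoc, mul_rpow (rpow_nonneg hδ _) (by positivity), ← rpow_mul hδ,
    one_div_mul_cancel (by positivity), rpow_one, rpow_mul (by positivity), rpow_two]
  ring_nf

lemma hasDerivAt_comp_sqrt {f : ℝ → ℝ} {x y : ℝ} (hx : 0 < x)
    (hf : HasDerivAt f (-2 / (π * √x * y ^ 2)) √x) :
    HasDerivAt (fun μ => f √μ) (-1 / (π * x * y ^ 2)) x := by
  refine (hf.comp x (hasDerivAt_sqrt hx.ne')).congr_deriv ?_
  have hs : 0 < √x := sqrt_pos.2 hx
  field_simp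
  rw [sq_sqrt hx.le]

lemma hasDerivWithinAt_Ici_zero_of_tendsto_div_rpow {r g : ℝ → ℝ} {ν K c : ℝ} (hν : 0 < ν)
    (hc : 0 < c) (hr : Tendsto (fun t => r t / (t / 2) ^ (2 * ν)) (𝓝[>] 0) (𝓝 (-K)))
    (hg0 : g 0 = 0) (hg : ∀ δ > 0, g δ = -r (δ ^ (1 / (2 * ν)) * c)) :
    HasDerivWithinAt g (K * (c ^ 2 / 4) ^ ν) (Set.Ici 0) 0 := by
  have ht := tendsto_rpow_mul_nhdsGT_zero (p := 1 / (2 * ν)) (by positivity) hc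
  have hlim := (hr.comp ht).neg.mul_const ((c ^ 2 / 4) ^ ν)
  rw [neg_neg] at hlim
  rw [hasDerivWithinAt_iff_tendsto_slope, Set.Ici_sdiff_left]
  refine hlim.congr' ?_
  filter_upwards [self_mem_nhdsWithin] with δ (hδ : 0 < δ)
  have hq : 0 < (c ^ 2 / 4) ^ ν := rpow_pos_of_pos (by positivity) ν
  simp only [Function.comp_apply]
  rw [slope_def_field, hg δ hδ, hg0, sub_zero, sub_zero, rpow_mul_div_two_rpow hδ.le hc.le hν]
  field_simp [hδ.ne']

theorem G_partial_derivatives_general (ν : ℝ) (hν : 1 / 2 < ν) (J Y : ℝ → ℝ)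
    (hJasymp : Tendsto (fun t => J t / ((t / 2) ^ ν / Real.Gamma (ν + 1)))
      (nhdsWithin 0 (Set.Ioi 0)) (nhds 1))
    (hYasymp : Tendsto (fun t => Y t / (-(Real.Gamma ν / π) * (2 / t) ^ ν))
      (nhdsWithin 0 (Set.Ioi 0)) (nhds 1))
    (hratio : ∀ t > (0 : ℝ), Y t ≠ 0 →
      HasDerivAt (fun s => J s / Y s) (-2 / (π * t * (Y t) ^ 2)) t)
    (lamStar : ℝ) (hlam : 0 < lamStar)
    (hJz : J (Real.sqrt lamStar) = 0) (hYz : Y (Real.sqrt lamStar) ≠ 0)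
    (G : ℝ → ℝ → ℝ)
    (hG0 : ∀ μ : ℝ, G 0 μ = J (Real.sqrt μ) / Y (Real.sqrt μ))
    (hG : ∀ δ > (0 : ℝ), ∀ μ : ℝ, G δ μ =
      J (Real.sqrt μ) / Y (Real.sqrt μ) -
        J (δ ^ (1 / (2 * ν)) * Real.sqrt μ) / Y (δ ^ (1 / (2 * ν)) * Real.sqrt μ)) :
    HasDerivAt (fun μ => G 0 μ) (-1 / (π * lamStar * (Y (Real.sqrt lamStar)) ^ 2)) lamStar ∧
    HasDerivWithinAt (fun δ => G δ lamStar)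
      (π / (ν * (Real.Gamma ν) ^ 2) * (lamStar / 4) ^ ν) (Set.Ici 0) 0 := by
  have hν0 : 0 < ν := by linarith
  have hc : 0 < √lamStar := sqrt_pos.2 hlam
  constructor
  · simp only [hG0]
    exact hasDerivAt_comp_sqrt hlam (hratio _ hc hYz)
  · have h := hasDerivWithinAt_Ici_zero_of_tendsto_div_rpow (g := fun δ => G δ lamStar) hν0 hc
      (tendsto_ratio_div_rpow_of_asymp hν0 hJasymp hYasymp) (by rw [hG0, hJz, zero_div])
      fun δ hδ => by rw [hG δ hδ, hJz, zero_div, zero_sub]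
    rwa [sq_sqrt hlam.le] at h

/-- partial derivatives of
`G(δ, λ) = J_ν(√λ)/Y_ν(√λ) - J_ν(δ^{1/(2ν)}√λ)/Y_ν(δ^{1/(2ν)}√λ)`
(extended to `δ = 0` by `G(0,λ) = J_ν(√λ)/Y_ν(√λ)`) at the point `(0, λ*)`:
`∂G/∂λ = -1/(π λ* Y_ν(√λ*)²)` and `∂G/∂δ = (π/(ν Γ(ν)²)) (λ*/4)^ν`.
Here `J` and `Y` are the Bessel functions of order `ν`, characterized by the
small-argument asymptotics and the derivative formula
`d/dt (J(t)/Y(t)) = -2/(π t Y(t)²)`. -/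
theorem G_partial_derivatives (ν : ℝ) (hν : 1 / 2 < ν) (J Y : ℝ → ℝ)
    (hJsmooth : ContDiffOn ℝ 1 J (Set.Ioi 0)) (hYsmooth : ContDiffOn ℝ 1 Y (Set.Ioi 0))
    (hJasymp : Tendsto (fun t => J t / ((t / 2) ^ ν / Real.Gamma (ν + 1)))
      (nhdsWithin 0 (Set.Ioi 0)) (nhds 1))
    (hYasymp : Tendsto (fun t => Y t / (-(Real.Gamma ν / π) * (2 / t) ^ ν))
      (nhdsWithin 0 (Set.Ioi 0)) (nhds 1))
    (hratio : ∀ t > (0 : ℝ), Y t ≠ 0 →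
      HasDerivAt (fun s => J s / Y s) (-2 / (π * t * (Y t) ^ 2)) t)
    (lamStar : ℝ) (hlam : 0 < lamStar)
    (hJz : J (Real.sqrt lamStar) = 0) (hYz : Y (Real.sqrt lamStar) ≠ 0)
    (G : ℝ → ℝ → ℝ)
    (hG0 : ∀ μ : ℝ, G 0 μ = J (Real.sqrt μ) / Y (Real.sqrt μ))
    (hG : ∀ δ > (0 : ℝ), ∀ μ : ℝ, G δ μ =
      J (Real.sqrt μ) / Y (Real.sqrt μ) -
        J (δ ^ (1 / (2 * ν)) * Real.sqrt μ) / Y (δ ^ (1 / (2 * ν)) * Real.sqrt μ)) :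
    HasDerivAt (fun μ => G 0 μ) (-1 / (π * lamStar * (Y (Real.sqrt lamStar)) ^ 2)) lamStar ∧
    HasDerivWithinAt (fun δ => G δ lamStar)
      (π / (ν * (Real.Gamma ν) ^ 2) * (lamStar / 4) ^ ν) (Set.Ici 0) 0 :=
  G_partial_derivatives_general ν hν J Y hJasymp hYasymp hratio lamStar hlam hJz hYz G hG0 hG
end

section
/- Let N = 2 and β ∈ (π/2, π). Then the first Dirichlet eigenfunction u of the Laplacian on the planar sector Ω_β = {(r cos θ, r sin θ) : 0 < r < 1, |θ| < β}, given in polar coordinates by u(r,θ) = J_{π/(2β)}(r√{λ₁}) cos(πθ/(2β)) with √{λ₁} the first positive zero of J_{π/(2β)}, has gradient in L^p(Ω_β) for all 2 ≤ p < 2/(1 − π/(2β)), but ∇u ∉ L^p(Ω_β) for p = 2/(1 − π/(2β)). -/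
open Real MeasureTheory Filter Topology
open Set intervalIntegral
open scoped ENNReal NNReal

set_option maxHeartbeats 1600000

lemma eventually_to_delta {P : ℝ → Prop} (h : ∀ᶠ t in 𝓝[>](0:ℝ), P t) :
    ∃ δ > (0:ℝ), ∀ t, 0 < t → t < δ → P t := by
  rw [eventually_nhdsWithin_iff, Metric.eventually_nhds_iff] at h
  obtain ⟨ε, hε, hball⟩ := h
  refine ⟨ε, hε, fun t ht htε => hball ?_ ht⟩
  rw [Real.dist_eq, sub_zero, abs_of_pos ht]; exact htε

lemma bessel_deriv_asymp (ν : ℝ) (hν0 : 0 < ν) (hν1 : ν < 1) (J : ℝ → ℝ)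
    (hJsmooth : ContDiffOn ℝ 2 J (Set.Ioi 0))
    (hJode : ∀ t > (0:ℝ),
      t ^ 2 * deriv (deriv J) t + t * deriv J t + (t ^ 2 - ν ^ 2) * J t = 0)
    (c : ℝ) (hc : 0 < c)
    (hJc : Tendsto (fun t => J t / t ^ ν) (𝓝[>] 0) (𝓝 c)) :
    Tendsto (fun t => deriv J t / t ^ (ν - 1)) (𝓝[>] 0) (𝓝 (c * ν)) := by
  have hopen : IsOpen (Set.Ioi (0:ℝ)) := isOpen_Ioi
  have hd2 : ∀ t ∈ Set.Ioi (0:ℝ), HasDerivAt (deriv J) (deriv (deriv J) t) t := by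
    intro t ht
    exact (((hJsmooth.deriv_of_isOpen (m := 1) hopen (by norm_num)).contDiffAt
      (hopen.mem_nhds ht)).differentiableAt (by norm_num)).hasDerivAt
  have hJcont : ContinuousOn J (Set.Ioi 0) := hJsmooth.continuousOn
  have hJ'cont : ContinuousOn (deriv J) (Set.Ioi 0) :=
    (hJsmooth.deriv_of_isOpen (m := 1) hopen (by norm_num)).continuousOn
  set g : ℝ → ℝ := fun t => t * deriv J t with hgdef
  set h : ℝ → ℝ := fun t => (ν ^ 2 / t - t) * J t with hhdef
  have hgderiv : ∀ t ∈ Set.Ioi (0:ℝ), HasDerivAt g (h t) t := by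
    intro t ht
    have ht0 : t ≠ 0 := ne_of_gt ht
    have h1 : HasDerivAt g (1 * deriv J t + t * deriv (deriv J) t) t :=
      (hasDerivAt_id t).mul (hd2 t ht)
    have h2 : 1 * deriv J t + t * deriv (deriv J) t = h t := by
      rw [hhdef]
      field_simp
      linear_combination hJode t ht
    rwa [h2] at h1
  have hgcont : ContinuousOn g (Set.Ioi 0) := continuousOn_id.mul hJ'cont
  have hhcont : ContinuousOn h (Set.Ioi 0) := by
    apply ContinuousOn.mul _ hJcont
    exact (continuousOn_const.div continuousOn_id fun t ht => ne_of_gt ht).sub continuousOn_id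
  -- J is bounded by 2c t^ν near 0
  have hJboundE : ∀ᶠ t in 𝓝[>](0:ℝ), |J t| ≤ 2 * c * t ^ ν := by
    have h1 : ∀ᶠ t in 𝓝[>](0:ℝ), dist (J t / t ^ ν) c < c := hJc (Metric.ball_mem_nhds c hc)
    filter_upwards [h1, self_mem_nhdsWithin] with t hdist ht
    have htpos : (0:ℝ) < t := ht
    have htν : (0:ℝ) < t ^ ν := Real.rpow_pos_of_pos htpos ν
    rw [Real.dist_eq, abs_sub_lt_iff] at hdist
    have habs : |J t / t ^ ν| ≤ 2 * c := by
      rw [abs_le]; constructor <;> [linarith [hdist.2]; linarith [hdist.1]]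
    calc |J t| = |(J t / t ^ ν) * t ^ ν| := by
          rw [div_mul_cancel₀ _ (ne_of_gt htν)]
      _ = |J t / t ^ ν| * t ^ ν := by rw [abs_mul, abs_of_pos htν]
      _ ≤ 2 * c * t ^ ν := by gcongr
  obtain ⟨δ₁, hδ₁, hJbound⟩ := eventually_to_delta hJboundE
  set b : ℝ := min δ₁ 1 / 2 with hbdef
  have hbpos : 0 < b := by positivity
  have hble1 : b ≤ 1 := by
    rw [hbdef]; have := min_le_right δ₁ 1; linarith
  have hbltδ₁ : b < δ₁ := by
    rw [hbdef]
    rcases le_total δ₁ 1 with hc1 | hc1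
    · rw [min_eq_left hc1]; linarith
    · rw [min_eq_right hc1]; linarith
  set K : ℝ := (ν ^ 2 + 1) * (2 * c) with hKdef
  have hKpos : 0 < K := by positivity
  have hhbound : ∀ t, 0 < t → t ≤ b → |h t| ≤ K * t ^ (ν - 1) := by
    intro t ht htb
    have ht0 : t ≠ 0 := ne_of_gt ht
    have htle1 : t ≤ 1 := le_trans htb hble1
    have hJt : |J t| ≤ 2 * c * t ^ ν := hJbound t ht (lt_of_le_of_lt htb hbltδ₁)
    have hfac : |ν ^ 2 / t - t| ≤ (ν ^ 2 + 1) / t := by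
      rw [le_div_iff₀ ht]
      have e2 : (ν ^ 2 / t - t) * t = ν ^ 2 - t ^ 2 := by field_simp
      have e : |ν ^ 2 / t - t| * t = |ν ^ 2 - t ^ 2| := by
        calc |ν ^ 2 / t - t| * t = |(ν ^ 2 / t - t) * t| := by rw [abs_mul, abs_of_pos ht]
          _ = |ν ^ 2 - t ^ 2| := by rw [e2]
      rw [e, abs_le]
      constructor <;> nlinarith
    have hrw : t ^ (ν - 1) = t ^ ν / t := by
      rw [Real.rpow_sub ht, Real.rpow_one]
    calc |h t| = |ν ^ 2 / t - t| * |J t| := abs_mul _ _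
      _ ≤ ((ν ^ 2 + 1) / t) * (2 * c * t ^ ν) := by
          apply mul_le_mul hfac hJt (abs_nonneg _) (by positivity)
      _ = K * t ^ (ν - 1) := by rw [hrw, hKdef]; field_simp
  -- integrability of h near 0
  have hIntdom : IntegrableOn (fun t => K * t ^ (ν - 1)) (Set.Ioc 0 b) := by
    have h1 := intervalIntegral.intervalIntegrable_rpow' (a := 0) (b := b)
      (by linarith : (-1:ℝ) < ν - 1)
    rw [intervalIntegrable_iff_integrableOn_Ioc_of_le hbpos.le] at h1
    exact h1.const_mul K
  have hInt : IntegrableOn h (Set.Ioc 0 b) := by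
    have hmeas : AEStronglyMeasurable h (volume.restrict (Set.Ioc 0 b)) :=
      (hhcont.mono Set.Ioc_subset_Ioi_self).aestronglyMeasurable measurableSet_Ioc
    refine hIntdom.mono' hmeas ?_
    refine (ae_restrict_iff' measurableSet_Ioc).mpr (Filter.Eventually.of_forall fun t ht => ?_)
    rw [Real.norm_eq_abs]
    exact hhbound t ht.1 ht.2
  have hIntst : ∀ t, 0 ≤ t → t ≤ b → IntervalIntegrable h volume 0 t := by
    intro t h0 hb
    rw [intervalIntegrable_iff_integrableOn_Ioc_of_le h0]
    exact hInt.mono_set (Set.Ioc_subset_Ioc le_rfl hb)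
  have hftc : ∀ s t, 0 < s → s ≤ t → t ≤ b → (∫ x in s..t, h x) = g t - g s := by
    intro s t hs hst htb
    apply intervalIntegral.integral_eq_sub_of_hasDerivAt
    · intro x hx
      rw [Set.uIcc_of_le hst] at hx
      exact hgderiv x (lt_of_lt_of_le hs hx.1)
    · apply ContinuousOn.intervalIntegrable
      apply hhcont.mono
      rw [Set.uIcc_of_le hst]
      exact fun x hx => lt_of_lt_of_le hs hx.1
  set L : ℝ := g b - ∫ x in (0:ℝ)..b, h x with hLdef
  have hgL : ∀ t, 0 < t → t ≤ b → |g t - L| ≤ K / ν * t ^ ν := by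
    intro t ht htb
    have h1 : (∫ x in t..b, h x) = g b - g t := hftc t b ht htb le_rfl
    have h2 : (∫ x in (0:ℝ)..b, h x) - ∫ x in (0:ℝ)..t, h x = ∫ x in t..b, h x :=
      intervalIntegral.integral_interval_sub_left (hIntst b hbpos.le le_rfl)
        (hIntst t ht.le htb)
    have h3 : g t - L = ∫ x in (0:ℝ)..t, h x := by
      rw [hLdef]; linarith
    rw [h3]
    have h4 : ‖∫ x in (0:ℝ)..t, h x‖ ≤ |∫ x in (0:ℝ)..t, K * x ^ (ν - 1)| := by
      apply intervalIntegral.norm_integral_le_abs_of_norm_le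
      · rw [Set.uIoc_of_le ht.le]
        refine (ae_restrict_iff' measurableSet_Ioc).mpr
          (Filter.Eventually.of_forall fun x hx => ?_)
        rw [Real.norm_eq_abs]
        exact hhbound x hx.1 (le_trans hx.2 htb)
      · exact (intervalIntegral.intervalIntegrable_rpow' (by linarith)).const_mul K
    have h5 : (∫ x in (0:ℝ)..t, K * x ^ (ν - 1)) = K / ν * t ^ ν := by
      rw [intervalIntegral.integral_const_mul, integral_rpow (Or.inl (by linarith))]
      rw [show ν - 1 + 1 = ν from by ring, Real.zero_rpow (ne_of_gt hν0), sub_zero]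
      ring
    rw [← Real.norm_eq_abs]
    rw [h5, abs_of_pos (by positivity)] at h4
    exact h4
  have htν0 : Tendsto (fun t : ℝ => t ^ ν) (𝓝[>](0:ℝ)) (𝓝 0) := by
    have hco := (Real.continuousAt_rpow_const 0 ν (Or.inr hν0.le)).tendsto
    rw [Real.zero_rpow (ne_of_gt hν0)] at hco
    exact hco.mono_left nhdsWithin_le_nhds
  have hgtend : Tendsto g (𝓝[>](0:ℝ)) (𝓝 L) := by
    rw [tendsto_iff_dist_tendsto_zero]
    refine squeeze_zero' (g := fun t => K / ν * t ^ ν) (Filter.Eventually.of_forall fun t => dist_nonneg) ?_ ?_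
    · filter_upwards [Ioo_mem_nhdsGT_of_mem ⟨le_refl (0:ℝ), hbpos⟩] with t ht
      rw [Real.dist_eq]
      exact hgL t ht.1 ht.2.le
    · have h6 := htν0.const_mul (K / ν)
      rwa [mul_zero] at h6
  have hJ0 : Tendsto J (𝓝[>](0:ℝ)) (𝓝 0) := by
    have h1 := hJc.mul htν0
    rw [mul_zero] at h1
    apply h1.congr'
    filter_upwards [self_mem_nhdsWithin] with t ht
    exact div_mul_cancel₀ _ (ne_of_gt (Real.rpow_pos_of_pos ht ν))
  -- L = 0
  have hL0 : L = 0 := by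
    by_contra hL
    have hev : ∀ᶠ t in 𝓝[>](0:ℝ), |g t - L| < |L| / 2 := by
      filter_upwards [Metric.tendsto_nhds.mp hgtend (|L| / 2) (by positivity)] with t ht
      rwa [Real.dist_eq] at ht
    obtain ⟨δ₂, hδ₂, hgnear⟩ := eventually_to_delta hev
    set b' : ℝ := min b δ₂ / 2 with hb'def
    have hb'pos : 0 < b' := by positivity
    have hb'b : b' ≤ b := by
      rw [hb'def]
      rcases le_total b δ₂ with h1 | h1
      · rw [min_eq_left h1]; linarith
      · rw [min_eq_right h1]; linarith
    have hb'δ₂ : b' < δ₂ := by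
      rw [hb'def]
      rcases le_total b δ₂ with h1 | h1
      · rw [min_eq_left h1]; linarith
      · rw [min_eq_right h1]; linarith
    have hJftc : ∀ s, 0 < s → s ≤ b' → (∫ x in s..b', deriv J x) = J b' - J s := by
      intro s hs hsb
      apply intervalIntegral.integral_eq_sub_of_hasDerivAt
      · intro x hx
        rw [Set.uIcc_of_le hsb] at hx
        have hx0 : (0:ℝ) < x := lt_of_lt_of_le hs hx.1
        exact ((hJsmooth.contDiffAt (hopen.mem_nhds hx0)).differentiableAt
          (by norm_num)).hasDerivAt
      · apply ContinuousOn.intervalIntegrable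
        apply hJ'cont.mono
        rw [Set.uIcc_of_le hsb]
        exact fun x hx => lt_of_lt_of_le hs hx.1
    have hloginv : ∀ s, 0 < s → s ≤ b' →
        (∫ x in s..b', (L / 2) * x⁻¹) = L / 2 * (Real.log b' - Real.log s) := by
      intro s hs hsb
      rw [intervalIntegral.integral_const_mul, integral_inv]
      · rw [Real.log_div (ne_of_gt hb'pos) (ne_of_gt hs)]
      · rw [Set.uIcc_of_le hsb]
        intro hmem
        exact absurd hmem.1 (not_le.mpr hs)
    have hintinv : ∀ s, 0 < s → s ≤ b' → IntervalIntegrable (fun x => (L/2) * x⁻¹) volume s b' := by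
      intro s hs hsb
      apply ContinuousOn.intervalIntegrable
      apply (continuousOn_const.mul (continuousOn_inv₀.mono ?_))
      rw [Set.uIcc_of_le hsb]
      exact fun x hx => ne_of_gt (lt_of_lt_of_le hs hx.1)
    have hintJ' : ∀ s, 0 < s → s ≤ b' → IntervalIntegrable (deriv J) volume s b' := by
      intro s hs hsb
      apply ContinuousOn.intervalIntegrable
      apply hJ'cont.mono
      rw [Set.uIcc_of_le hsb]
      exact fun x hx => lt_of_lt_of_le hs hx.1
    have hJsmall : ∀ᶠ s in 𝓝[>](0:ℝ), |J s| < 1 := by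
      filter_upwards [Metric.tendsto_nhds.mp hJ0 1 one_pos] with s hs
      rwa [Real.dist_eq, sub_zero] at hs
    have hlogtop : Tendsto (fun s : ℝ => Real.log b' - Real.log s) (𝓝[>](0:ℝ)) atTop := by
      apply Filter.tendsto_atTop.mpr
      intro C
      have := Real.tendsto_log_nhdsGT_zero
      filter_upwards [Filter.tendsto_atBot.mp this (Real.log b' - C)] with s hs
      linarith
    rcases lt_or_gt_of_ne hL with hLneg | hLpos
    · -- L < 0 : g x ≤ L/2 < 0 near 0
      have hgle : ∀ x, 0 < x → x ≤ b' → deriv J x ≤ (L / 2) / x := by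
        intro x hx hxb
        have h1 : |g x - L| < |L| / 2 := hgnear x hx (lt_of_le_of_lt hxb hb'δ₂)
        rw [abs_of_neg hLneg, abs_lt] at h1
        have h2 : x * deriv J x ≤ L / 2 := by
          have e : g x = x * deriv J x := rfl
          linarith [h1.2]
        rw [le_div_iff₀ hx]
        linarith
      have hle : ∀ s, 0 < s → s ≤ b' → J b' - J s ≤ L / 2 * (Real.log b' - Real.log s) := by
        intro s hs hsb
        rw [← hJftc s hs hsb, ← hloginv s hs hsb]
        apply intervalIntegral.integral_mono_on hsb (hintJ' s hs hsb) (hintinv s hs hsb)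
        intro x hx
        exact hgle x (lt_of_lt_of_le hs hx.1) hx.2
      have hbot : Tendsto (fun s : ℝ => L / 2 * (Real.log b' - Real.log s)) (𝓝[>](0:ℝ)) atBot := by
        rw [Filter.tendsto_atBot]
        intro C
        filter_upwards [Filter.tendsto_atTop.mp hlogtop (C / (L / 2))] with s hs
        have hL2 : L / 2 < 0 := by linarith
        have h1 : L / 2 * (Real.log b' - Real.log s) ≤ L / 2 * (C / (L / 2)) :=
          mul_le_mul_of_nonpos_left hs (le_of_lt hL2)
        have h2 : L / 2 * (C / (L / 2)) = C := by
          rw [mul_comm]; exact div_mul_cancel₀ C (ne_of_lt hL2)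
        linarith
      have hevB : ∀ᶠ s in 𝓝[>](0:ℝ), L / 2 * (Real.log b' - Real.log s) < -|J b'| - 1 :=
        hbot.eventually_lt_atBot _
      obtain ⟨s, ⟨hs1, hs2⟩, hs3⟩ :=
        ((hevB.and hJsmall).and (Ioo_mem_nhdsGT_of_mem ⟨le_refl (0:ℝ), hb'pos⟩)).exists
      have h1 := hle s hs3.1 hs3.2.le
      have h2 := abs_lt.mp hs2
      linarith [neg_abs_le (J b')]
    · -- L > 0 : g x ≥ L/2 > 0 near 0
      have hgge : ∀ x, 0 < x → x ≤ b' → (L / 2) / x ≤ deriv J x := by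
        intro x hx hxb
        have h1 : |g x - L| < |L| / 2 := hgnear x hx (lt_of_le_of_lt hxb hb'δ₂)
        rw [abs_of_pos hLpos, abs_lt] at h1
        have h2 : L / 2 ≤ x * deriv J x := by
          have e : g x = x * deriv J x := rfl
          linarith [h1.1]
        rw [div_le_iff₀ hx]
        linarith
      have hle : ∀ s, 0 < s → s ≤ b' → L / 2 * (Real.log b' - Real.log s) ≤ J b' - J s := by
        intro s hs hsb
        rw [← hJftc s hs hsb, ← hloginv s hs hsb]
        apply intervalIntegral.integral_mono_on hsb (hintinv s hs hsb) (hintJ' s hs hsb)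
        intro x hx
        exact hgge x (lt_of_lt_of_le hs hx.1) hx.2
      have htop : Tendsto (fun s : ℝ => L / 2 * (Real.log b' - Real.log s)) (𝓝[>](0:ℝ)) atTop := by
        rw [Filter.tendsto_atTop]
        intro C
        filter_upwards [Filter.tendsto_atTop.mp hlogtop (C / (L / 2))] with s hs
        have hL2 : (0:ℝ) < L / 2 := by linarith
        have h1 : L / 2 * (C / (L / 2)) ≤ L / 2 * (Real.log b' - Real.log s) :=
          mul_le_mul_of_nonneg_left hs (le_of_lt hL2)
        have h2 : L / 2 * (C / (L / 2)) = C := by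
          rw [mul_comm]; exact div_mul_cancel₀ C (ne_of_gt hL2)
        linarith
      have hevB : ∀ᶠ s in 𝓝[>](0:ℝ), |J b'| + 1 < L / 2 * (Real.log b' - Real.log s) :=
        htop.eventually_gt_atTop _
      obtain ⟨s, ⟨hs1, hs2⟩, hs3⟩ :=
        ((hevB.and hJsmall).and (Ioo_mem_nhdsGT_of_mem ⟨le_refl (0:ℝ), hb'pos⟩)).exists
      have h1 := hle s hs3.1 hs3.2.le
      have h2 := abs_lt.mp hs2
      linarith [le_abs_self (J b')]
  -- now g → 0 ; apply L'Hôpital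
  rw [hL0] at hgtend
  have hff' : ∀ᶠ x in 𝓝[>](0:ℝ), HasDerivAt g (h x) x :=
    eventually_nhdsWithin_of_forall hgderiv
  have hgg' : ∀ᶠ x in 𝓝[>](0:ℝ), HasDerivAt (fun t : ℝ => t ^ ν) (ν * x ^ (ν - 1)) x :=
    eventually_nhdsWithin_of_forall fun x hx =>
      Real.hasDerivAt_rpow_const (Or.inl (ne_of_gt hx))
  have hg'ne : ∀ᶠ x in 𝓝[>](0:ℝ), ν * x ^ (ν - 1) ≠ 0 :=
    eventually_nhdsWithin_of_forall fun x hx =>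
      ne_of_gt (mul_pos hν0 (Real.rpow_pos_of_pos hx _))
  have hdiv : Tendsto (fun x => h x / (ν * x ^ (ν - 1))) (𝓝[>](0:ℝ)) (𝓝 (c * ν)) := by
    have h2 : Tendsto (fun x : ℝ => (ν ^ 2 - x ^ 2) / ν) (𝓝[>](0:ℝ)) (𝓝 ν) := by
      have hcont : Continuous fun x : ℝ => (ν ^ 2 - x ^ 2) / ν := by continuity
      have h3 := (hcont.tendsto 0).mono_left (nhdsWithin_le_nhds (s := Set.Ioi (0:ℝ)))
      have hval : (ν ^ 2 - (0:ℝ) ^ 2) / ν = ν := by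
        field_simp [ne_of_gt hν0]
        ring
      rwa [hval] at h3
    have hmul := hJc.mul h2
    apply hmul.congr'
    filter_upwards [self_mem_nhdsWithin] with x hx
    have hx0 : x ≠ 0 := ne_of_gt hx
    have hxν : x ^ ν ≠ 0 := ne_of_gt (Real.rpow_pos_of_pos hx _)
    have hxν1 : x ^ (ν - 1) ≠ 0 := ne_of_gt (Real.rpow_pos_of_pos hx _)
    have hsplit : x ^ ν = x ^ (ν - 1) * x := by
      rw [← Real.rpow_add_one hx0 (ν - 1), show ν - 1 + 1 = ν from by ring]
    rw [hhdef]
    simp only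
    rw [hsplit]
    field_simp
  have hlh := HasDerivAt.lhopital_zero_nhdsGT hff' hgg' hg'ne hgtend htν0 hdiv
  apply hlh.congr'
  filter_upwards [self_mem_nhdsWithin] with x hx
  have hx0 : x ≠ 0 := ne_of_gt hx
  have hxν1 : x ^ (ν - 1) ≠ 0 := ne_of_gt (Real.rpow_pos_of_pos hx _)
  have hsplit : x ^ ν = x ^ (ν - 1) * x := by
    rw [← Real.rpow_add_one hx0 (ν - 1), show ν - 1 + 1 = ν from by ring]
  rw [hgdef]
  simp only
  rw [hsplit]
  field_simp

lemma aux_hasFDerivAt_abs {z : ℂ} (hz : z ≠ 0) :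
    HasFDerivAt (fun w : ℂ => ‖w‖)
      ((‖z‖)⁻¹ • (z.re • Complex.reCLM + z.im • Complex.imCLM)) z := by
  have hn : Complex.normSq z ≠ 0 := by
    simpa [Complex.normSq_pos] using (Complex.normSq_pos.2 hz).ne'
  have h1 : HasFDerivAt (fun w : ℂ => Complex.normSq w)
      ((2 * z.re) • (Complex.reCLM : ℂ →L[ℝ] ℝ) + (2 * z.im) • Complex.imCLM) z := by
    have hre : HasFDerivAt (fun w : ℂ => w.re) (Complex.reCLM : ℂ →L[ℝ] ℝ) z :=
      Complex.reCLM.hasFDerivAt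
    have him : HasFDerivAt (fun w : ℂ => w.im) (Complex.imCLM : ℂ →L[ℝ] ℝ) z :=
      Complex.imCLM.hasFDerivAt
    have h := (hre.mul hre).add (him.mul him)
    have e1 : (fun w : ℂ => Complex.normSq w) = fun w : ℂ => w.re * w.re + w.im * w.im := by
      funext w; simp [Complex.normSq_apply]
    rw [e1]
    refine h.congr_fderiv ?_
    ext w
    simp [ContinuousLinearMap.smul_apply, two_mul]
    ring
  have h2 : HasDerivAt Real.sqrt (1 / (2 * Real.sqrt (Complex.normSq z))) (Complex.normSq z) :=
    Real.hasDerivAt_sqrt hn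
  have h3 := h2.comp_hasFDerivAt z h1
  have e2 : (fun w : ℂ => ‖w‖) = Real.sqrt ∘ fun w : ℂ => Complex.normSq w := by
    funext w; simp [Complex.norm_def, Function.comp]
  rw [e2]
  refine h3.congr_fderiv ?_
  ext w
  have habs : Real.sqrt (Complex.normSq z) = ‖z‖ := (Complex.norm_def z).symm
  have hpos : (0:ℝ) < ‖z‖ := norm_pos_iff.mpr hz
  simp [ContinuousLinearMap.smul_apply, habs]
  field_simp

lemma aux_hasFDerivAt_arg {z : ℂ} (hz : z ∈ Complex.slitPlane) :
    HasFDerivAt Complex.arg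
      (Complex.imCLM.comp (((1 : ℂ →L[ℂ] ℂ).smulRight z⁻¹).restrictScalars ℝ)) z := by
  have hlog : HasFDerivAt Complex.log ((1 : ℂ →L[ℂ] ℂ).smulRight z⁻¹) z :=
    (Complex.hasDerivAt_log hz).hasFDerivAt
  have h := Complex.imCLM.hasFDerivAt.comp z (hlog.restrictScalars ℝ)
  have harg : Complex.arg = fun w => (Complex.log w).im := funext fun w => (Complex.log_im w).symm
  rw [harg]; exact h

lemma grad_bounds (J : ℝ → ℝ) (r₀ ν a : ℝ) (z : ℂ) (hz : z ∈ Complex.slitPlane)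
    (hJ : HasDerivAt J a (r₀ * ‖z‖)) :
    |Real.cos (ν * Complex.arg z) * (a * r₀)| ≤
      ‖fderiv ℝ (fun w => J (r₀ * ‖w‖) * Real.cos (ν * Complex.arg w)) z‖ ∧
    ‖fderiv ℝ (fun w => J (r₀ * ‖w‖) * Real.cos (ν * Complex.arg w)) z‖ ≤
      |a| * |r₀| + |J (r₀ * ‖z‖)| * |ν| * (‖z‖)⁻¹ := by
  have hz0 : z ≠ 0 := Complex.slitPlane_ne_zero hz
  have hzpos : (0:ℝ) < ‖z‖ := norm_pos_iff.mpr hz0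
  set Az : ℂ →L[ℝ] ℝ := (‖z‖)⁻¹ • (z.re • Complex.reCLM + z.im • Complex.imCLM) with hAz
  set Bz : ℂ →L[ℝ] ℝ :=
    Complex.imCLM.comp (((1 : ℂ →L[ℂ] ℂ).smulRight z⁻¹).restrictScalars ℝ) with hBz
  have hAapp : ∀ w : ℂ, Az w = (‖z‖)⁻¹ * (z.re * w.re + z.im * w.im) := by
    intro w
    rw [hAz]
    simp only [ContinuousLinearMap.smul_apply, ContinuousLinearMap.add_apply,
      Complex.reCLM_apply, Complex.imCLM_apply, smul_eq_mul]
  have hBapp : ∀ w : ℂ, Bz w = (w * z⁻¹).im := by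
    intro w
    rw [hBz]
    simp only [ContinuousLinearMap.coe_comp', Function.comp_apply,
      ContinuousLinearMap.coe_restrictScalars', ContinuousLinearMap.smulRight_apply,
      ContinuousLinearMap.one_apply, Complex.imCLM_apply, smul_eq_mul]
  -- derivative of the first factor
  have h1 : HasFDerivAt (fun w : ℂ => J (r₀ * ‖w‖)) (a • (r₀ • Az)) z := by
    have hin : HasFDerivAt (fun w : ℂ => r₀ * ‖w‖) (r₀ • Az) z :=
      (aux_hasFDerivAt_abs hz0).const_mul r₀
    exact hJ.comp_hasFDerivAt z hin
  -- derivative of the second factor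
  have h2 : HasFDerivAt (fun w : ℂ => Real.cos (ν * Complex.arg w))
      ((-Real.sin (ν * Complex.arg z)) • (ν • Bz)) z := by
    have hin : HasFDerivAt (fun w : ℂ => ν * Complex.arg w) (ν • Bz) z :=
      (aux_hasFDerivAt_arg hz).const_mul ν
    exact (Real.hasDerivAt_cos (ν * Complex.arg z)).comp_hasFDerivAt z hin
  have hD : HasFDerivAt (fun w => J (r₀ * ‖w‖) * Real.cos (ν * Complex.arg w))
      (J (r₀ * ‖z‖) • ((-Real.sin (ν * Complex.arg z)) • (ν • Bz)) +
        Real.cos (ν * Complex.arg z) • (a • (r₀ • Az))) z := h1.mul h2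
  set D := J (r₀ * ‖z‖) • ((-Real.sin (ν * Complex.arg z)) • (ν • Bz)) +
        Real.cos (ν * Complex.arg z) • (a • (r₀ • Az)) with hDdef
  rw [hD.fderiv]
  have hAnorm : ‖Az‖ ≤ 1 := by
    refine ContinuousLinearMap.opNorm_le_bound _ zero_le_one ?_
    intro w
    rw [hAapp w]
    have h1 : z.re * w.re + z.im * w.im = ((starRingEnd ℂ) z * w).re := by
      simp [Complex.mul_re]
    rw [h1, Real.norm_eq_abs, abs_mul, abs_inv]
    have h2 : |((starRingEnd ℂ) z * w).re| ≤ ‖z‖ * ‖w‖ := by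
      calc |((starRingEnd ℂ) z * w).re| ≤ ‖(starRingEnd ℂ) z * w‖ :=
            Complex.abs_re_le_norm _
        _ = ‖z‖ * ‖w‖ := by
            rw [norm_mul, Complex.norm_conj]
    rw [abs_of_pos hzpos]
    calc (‖z‖)⁻¹ * |((starRingEnd ℂ) z * w).re|
        ≤ (‖z‖)⁻¹ * (‖z‖ * ‖w‖) :=
          mul_le_mul_of_nonneg_left h2 (by positivity)
      _ = ‖w‖ := by field_simp
      _ = 1 * ‖w‖ := by rw [one_mul]
  have hBnorm : ‖Bz‖ ≤ (‖z‖)⁻¹ := by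
    refine ContinuousLinearMap.opNorm_le_bound _ (by positivity) ?_
    intro w
    rw [hBapp w, Real.norm_eq_abs]
    calc |(w * z⁻¹).im| ≤ ‖w * z⁻¹‖ := Complex.abs_im_le_norm _
      _ = ‖w‖ * (‖z‖)⁻¹ := by rw [norm_mul, norm_inv]
      _ = (‖z‖)⁻¹ * ‖w‖ := by ring
  constructor
  · -- lower bound: evaluate at unit radial vector
    set w₀ : ℂ := ((‖z‖)⁻¹ : ℝ) • z with hw₀
    have hw₀re : w₀.re = (‖z‖)⁻¹ * z.re := by rw [hw₀, Complex.smul_re, smul_eq_mul]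
    have hw₀im : w₀.im = (‖z‖)⁻¹ * z.im := by rw [hw₀, Complex.smul_im, smul_eq_mul]
    have hw₀norm : ‖w₀‖ = 1 := by
      rw [hw₀, norm_smul, Real.norm_eq_abs,
        abs_of_pos (inv_pos.2 hzpos)]
      field_simp
    have hsq : z.re * z.re + z.im * z.im = ‖z‖ * ‖z‖ := by
      have h := Complex.sq_norm z
      rw [Complex.normSq_apply] at h
      rw [← h]; ring
    have hA : Az w₀ = 1 := by
      rw [hAapp, hw₀re, hw₀im]
      have e : z.re * ((‖z‖)⁻¹ * z.re) + z.im * ((‖z‖)⁻¹ * z.im)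
          = (‖z‖)⁻¹ * (z.re * z.re + z.im * z.im) := by ring
      rw [e, hsq]
      field_simp
    have hB : Bz w₀ = 0 := by
      rw [hBapp]
      have e : w₀ * z⁻¹ = (((‖z‖)⁻¹ : ℝ) : ℂ) := by
        rw [hw₀, Complex.real_smul, mul_assoc, mul_inv_cancel₀ hz0, mul_one]
      rw [e, Complex.ofReal_im]
    have hDw₀ : D w₀ = Real.cos (ν * Complex.arg z) * (a * r₀) := by
      rw [hDdef]
      simp only [ContinuousLinearMap.add_apply, ContinuousLinearMap.smul_apply, hA, hB,
        smul_eq_mul]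
      ring
    calc |Real.cos (ν * Complex.arg z) * (a * r₀)| = ‖D w₀‖ := by
          rw [hDw₀, Real.norm_eq_abs]
      _ ≤ ‖D‖ * ‖w₀‖ := D.le_opNorm w₀
      _ = ‖D‖ := by rw [hw₀norm, mul_one]
  · -- upper bound, pointwise
    have hApt : ∀ w : ℂ, |Az w| ≤ ‖w‖ := by
      intro w
      have := hAnorm
      calc |Az w| = ‖Az w‖ := (Real.norm_eq_abs _).symm
        _ ≤ ‖Az‖ * ‖w‖ := Az.le_opNorm w
        _ ≤ 1 * ‖w‖ := by gcongr
        _ = ‖w‖ := one_mul _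
    have hBpt : ∀ w : ℂ, |Bz w| ≤ (‖z‖)⁻¹ * ‖w‖ := by
      intro w
      calc |Bz w| = ‖Bz w‖ := (Real.norm_eq_abs _).symm
        _ ≤ ‖Bz‖ * ‖w‖ := Bz.le_opNorm w
        _ ≤ (‖z‖)⁻¹ * ‖w‖ := by gcongr
    refine ContinuousLinearMap.opNorm_le_bound _ (by positivity) ?_
    intro w
    have hDw : D w = J (r₀ * ‖z‖) * (-Real.sin (ν * Complex.arg z) * (ν * Bz w)) +
        Real.cos (ν * Complex.arg z) * (a * (r₀ * Az w)) := by
      rw [hDdef]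
      simp only [ContinuousLinearMap.add_apply, ContinuousLinearMap.smul_apply, smul_eq_mul]
    rw [hDw, Real.norm_eq_abs]
    have e1 : |J (r₀ * ‖z‖) * (-Real.sin (ν * Complex.arg z) * (ν * Bz w))|
        = |J (r₀ * ‖z‖)| * |Real.sin (ν * Complex.arg z)| * |ν| * |Bz w| := by
      rw [abs_mul, abs_mul, abs_mul, abs_neg]; ring
    have e2 : |Real.cos (ν * Complex.arg z) * (a * (r₀ * Az w))|
        = |Real.cos (ν * Complex.arg z)| * |a| * |r₀| * |Az w| := by
      rw [abs_mul, abs_mul, abs_mul]; ring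
    calc |J (r₀ * ‖z‖) * (-Real.sin (ν * Complex.arg z) * (ν * Bz w)) +
        Real.cos (ν * Complex.arg z) * (a * (r₀ * Az w))|
        ≤ |J (r₀ * ‖z‖) * (-Real.sin (ν * Complex.arg z) * (ν * Bz w))| +
          |Real.cos (ν * Complex.arg z) * (a * (r₀ * Az w))| := abs_add_le _ _
      _ = |J (r₀ * ‖z‖)| * |Real.sin (ν * Complex.arg z)| * |ν| * |Bz w| +
          |Real.cos (ν * Complex.arg z)| * |a| * |r₀| * |Az w| := by rw [e1, e2]
      _ ≤ |J (r₀ * ‖z‖)| * 1 * |ν| * ((‖z‖)⁻¹ * ‖w‖) +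
          1 * |a| * |r₀| * ‖w‖ := by
          gcongr
          · exact Real.abs_sin_le_one _
          · exact hBpt w
          · exact Real.abs_cos_le_one _
          · exact hApt w
      _ = (|a| * |r₀| + |J (r₀ * ‖z‖)| * |ν| * (‖z‖)⁻¹) * ‖w‖ := by ring

-- |arg| < π/4 criterion
lemma aux_arg_lt {w : ℂ} (hre : 0 < w.re) (him : |w.im| < w.re) :
    |Complex.arg w| < π / 4 := by
  have hw0 : w ≠ 0 := fun h => by rw [h] at hre; simp at hre
  have habsp : 0 < ‖w‖ := norm_pos_iff.mpr hw0
  have habs : ‖w‖ < Real.sqrt 2 * w.re := by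
    have h1 : (‖w‖) ^ 2 < (Real.sqrt 2 * w.re) ^ 2 := by
      rw [Complex.sq_norm, Complex.normSq_apply, mul_pow,
        Real.sq_sqrt (by norm_num : (0:ℝ) ≤ 2)]
      have h2 := abs_lt.mp him
      nlinarith [h2.1, h2.2]
    exact lt_of_pow_lt_pow_left₀ 2 (by positivity) h1
  have hcos : Real.cos (π / 4) < Real.cos (Complex.arg w) := by
    rw [Real.cos_pi_div_four, Complex.cos_arg hw0]
    rw [div_lt_div_iff₀ (by norm_num) habsp]
    have h5 : Real.sqrt 2 * ‖w‖ < Real.sqrt 2 * (Real.sqrt 2 * w.re) :=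
      mul_lt_mul_of_pos_left habs (by positivity)
    have h6 : Real.sqrt 2 * (Real.sqrt 2 * w.re) = 2 * w.re := by
      rw [← mul_assoc, Real.mul_self_sqrt (by norm_num)]
    linarith
  by_contra hcon
  push_neg at hcon
  have h3 : |Complex.arg w| ≤ π / 2 := Complex.abs_arg_le_pi_div_two_iff.mpr hre.le
  have h4 : Real.cos |Complex.arg w| ≤ Real.cos (π / 4) :=
    Real.cos_le_cos_of_nonneg_of_le_pi (by positivity)
      (by linarith [Real.pi_pos]) hcon
  rw [Real.cos_abs] at h4
  linarith

lemma aux_cos_ge {θ ν : ℝ} (hν0 : 0 < ν) (hν1 : ν ≤ 1) (hθ : |θ| < π / 4) :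
    Real.cos (π / 4) ≤ Real.cos (ν * θ) := by
  have h1 : |ν * θ| ≤ π / 4 := by
    rw [abs_mul, abs_of_pos hν0]
    nlinarith [abs_nonneg θ]
  have h2 := Real.cos_le_cos_of_nonneg_of_le_pi (abs_nonneg (ν * θ))
    (by linarith [Real.pi_pos]) h1
  rwa [Real.cos_abs] at h2

/-- for `N = 2` and `β ∈ (π/2, π)`, the first Dirichlet eigenfunction
`u(r,θ) = J_ν(r√λ₁) cos(νθ)` (with `ν = π/(2β)` and `√λ₁` the first positive zero
of `J_ν`) on the planar sector of half-angle `β` has gradient in `L^p` for all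
`2 ≤ p < 2/(1 - ν)`, but not for `p = 2/(1 - ν)`. The sector is viewed as a subset
of `ℂ ≅ ℝ²`, and `J` is the Bessel function of the first kind of order `ν`,
characterized by the Bessel ODE and the small-argument asymptotics. -/
theorem sector_gradient_integrability (β : ℝ) (hβ : π / 2 < β) (hβ' : β < π)
    (ν : ℝ) (hν : ν = π / (2 * β))
    (J : ℝ → ℝ) (hJsmooth : ContDiffOn ℝ 2 J (Set.Ioi 0))
    (hJode : ∀ t > (0 : ℝ),
      t ^ 2 * deriv (deriv J) t + t * deriv J t + (t ^ 2 - ν ^ 2) * J t = 0)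
    (hJasymp : Tendsto (fun t => J t / ((t / 2) ^ ν / Real.Gamma (ν + 1)))
      (nhdsWithin 0 (Set.Ioi 0)) (nhds 1))
    (lam1 : ℝ) (hlam1 : 0 < lam1)
    (hzero : J (Real.sqrt lam1) = 0)
    (hfirst : ∀ t ∈ Set.Ioo (0 : ℝ) (Real.sqrt lam1), J t ≠ 0)
    (Ω : Set ℂ)
    (hΩ : Ω = {z : ℂ | ‖z‖ < 1 ∧ 0 < ‖z‖ ∧
      ‖z‖ * Real.cos β < z.re})
    (u : ℂ → ℝ)
    (hu : ∀ z : ℂ, u z = J (Real.sqrt lam1 * ‖z‖) *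
      Real.cos (ν * Complex.arg z)) :
    (∀ p : ℝ, 2 ≤ p → p < 2 / (1 - ν) →
      ∫⁻ z in Ω, ENNReal.ofReal (‖fderiv ℝ u z‖ ^ p) < ⊤) ∧
    ∫⁻ z in Ω, ENNReal.ofReal (‖fderiv ℝ u z‖ ^ (2 / (1 - ν))) = ⊤ := by
  have hπ := Real.pi_pos
  have hβ0 : 0 < β := by linarith
  have hν0 : 0 < ν := by rw [hν]; positivity
  have hν1 : ν < 1 := by rw [hν, div_lt_one (by positivity)]; linarith
  set r₀ := Real.sqrt lam1 with hr₀def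
  have hr₀ : 0 < r₀ := Real.sqrt_pos.mpr hlam1
  have hΓ : 0 < Real.Gamma (ν + 1) := Real.Gamma_pos_of_pos (by linarith)
  have h2ν : (0:ℝ) < 2 ^ ν := Real.rpow_pos_of_pos (by norm_num) ν
  set c : ℝ := (Real.Gamma (ν + 1) * 2 ^ ν)⁻¹ with hcdef
  have hc : 0 < c := by rw [hcdef]; positivity
  have hJc : Tendsto (fun t => J t / t ^ ν) (𝓝[>] (0:ℝ)) (𝓝 c) := by
    have h1 := hJasymp.mul_const c
    rw [one_mul] at h1
    apply h1.congr'
    filter_upwards [self_mem_nhdsWithin] with t ht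
    have ht0 : (0:ℝ) < t := ht
    have htν : (0:ℝ) < t ^ ν := Real.rpow_pos_of_pos ht0 ν
    have h2 : (t / 2) ^ ν = t ^ ν / 2 ^ ν := Real.div_rpow ht0.le (by norm_num : (0:ℝ) ≤ 2) ν
    rw [h2, hcdef]
    field_simp
  have hJ'c := bessel_deriv_asymp ν hν0 hν1 J hJsmooth hJode c hc hJc
  -- eventual bounds near 0
  have hEb : ∀ᶠ t in 𝓝[>](0:ℝ), |J t| ≤ 2 * c * t ^ ν ∧
      c * ν / 2 * t ^ (ν - 1) ≤ deriv J t ∧ deriv J t ≤ 2 * (c * ν) * t ^ (ν - 1) := by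
    filter_upwards [Metric.tendsto_nhds.mp hJc c hc,
      Metric.tendsto_nhds.mp hJ'c (c * ν / 2) (by positivity),
      self_mem_nhdsWithin] with t h1 h2 ht
    have ht0 : (0:ℝ) < t := ht
    have htν : (0:ℝ) < t ^ ν := Real.rpow_pos_of_pos ht0 ν
    have htν1 : (0:ℝ) < t ^ (ν - 1) := Real.rpow_pos_of_pos ht0 _
    rw [Real.dist_eq, abs_sub_lt_iff] at h1 h2
    refine ⟨?_, ?_, ?_⟩
    · have habs : |J t / t ^ ν| ≤ 2 * c := by
        rw [abs_le]; constructor <;> [linarith [h1.2]; linarith [h1.1]]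
      calc |J t| = |(J t / t ^ ν) * t ^ ν| := by rw [div_mul_cancel₀ _ (ne_of_gt htν)]
        _ = |J t / t ^ ν| * t ^ ν := by rw [abs_mul, abs_of_pos htν]
        _ ≤ 2 * c * t ^ ν := by gcongr
    · have hlow : c * ν / 2 ≤ deriv J t / t ^ (ν - 1) := by linarith [h2.2]
      calc c * ν / 2 * t ^ (ν - 1) ≤ deriv J t / t ^ (ν - 1) * t ^ (ν - 1) := by gcongr
        _ = deriv J t := div_mul_cancel₀ _ (ne_of_gt htν1)
    · have hup : deriv J t / t ^ (ν - 1) ≤ 2 * (c * ν) := by nlinarith [h2.1]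
      calc deriv J t = deriv J t / t ^ (ν - 1) * t ^ (ν - 1) :=
            (div_mul_cancel₀ _ (ne_of_gt htν1)).symm
        _ ≤ 2 * (c * ν) * t ^ (ν - 1) := by gcongr
  obtain ⟨δ₀, hδ₀, hB⟩ := eventually_to_delta hEb
  set δ' : ℝ := min (δ₀ / (2 * r₀)) (1 / 2) with hδ'def
  have hδ'pos : 0 < δ' := lt_min (by positivity) (by norm_num)
  have hδ'le : δ' ≤ 1 / 2 := min_le_right _ _
  have hsmallt : ∀ z : ℂ, 0 < ‖z‖ → ‖z‖ < δ' →
      0 < r₀ * ‖z‖ ∧ r₀ * ‖z‖ < δ₀ := by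
    intro z h0 h1
    refine ⟨by positivity, ?_⟩
    have h2 : ‖z‖ < δ₀ / (2 * r₀) := lt_of_lt_of_le h1 (min_le_left _ _)
    have h3 : r₀ * ‖z‖ < r₀ * (δ₀ / (2 * r₀)) := by gcongr
    have h4 : r₀ * (δ₀ / (2 * r₀)) = δ₀ / 2 := by field_simp
    linarith
  -- replace u
  have hueq : u = fun z : ℂ => J (r₀ * ‖z‖) * Real.cos (ν * Complex.arg z) :=
    funext hu
  subst hueq
  -- membership facts
  have hcosβ0 : Real.cos β < 0 := Real.cos_neg_of_pi_div_two_lt_of_lt hβ (by linarith)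
  have hcosβ1 : -1 < Real.cos β := by
    have h1 := Real.cos_lt_cos_of_nonneg_of_le_pi hβ0.le (le_refl π) hβ'
    rwa [Real.cos_pi] at h1
  have hΩmem : ∀ z ∈ Ω, 0 < ‖z‖ ∧ ‖z‖ < 1 ∧ z ∈ Complex.slitPlane := by
    intro z hz
    rw [hΩ] at hz
    obtain ⟨h1, h2, h3⟩ := hz
    refine ⟨h2, h1, ?_⟩
    rw [Complex.mem_slitPlane_iff]
    by_contra hcon
    push_neg at hcon
    obtain ⟨hre, him⟩ := hcon
    have hzre : z = (z.re : ℂ) := Complex.ext (by simp) (by simp [him])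
    have habs : ‖z‖ = -z.re := by
      rw [hzre, Complex.norm_real, Real.norm_eq_abs, abs_of_nonpos hre, Complex.ofReal_re]
    rcases eq_or_lt_of_le hre with h0 | h0
    · rw [habs, h0] at h2; norm_num at h2
    · nlinarith [h3, habs]
  -- lower bound on cos π/4
  have hcos4 : 0 < Real.cos (π / 4) := by
    rw [Real.cos_pi_div_four]; positivity
  -- membership in Ω from sector conditions
  have hS'Ω : ∀ z : ℂ, 0 < ‖z‖ → ‖z‖ < δ' →
      |Complex.arg z| < π / 4 → z ∈ Ω := by
    intro z h0 h1 h2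
    have hz0 : z ≠ 0 := by
      intro h; rw [h] at h0; simp at h0
    rw [hΩ]
    refine ⟨by linarith, h0, ?_⟩
    have hcosarg : Real.cos (π / 4) ≤ Real.cos (Complex.arg z) := by
      have h3 := Real.cos_le_cos_of_nonneg_of_le_pi (abs_nonneg (Complex.arg z))
        (by linarith [Real.pi_pos]) h2.le
      rwa [Real.cos_abs] at h3
    have hre : z.re = ‖z‖ * Real.cos (Complex.arg z) := by
      rw [Complex.cos_arg hz0]
      field_simp
    rw [hre]
    have : Real.cos β < Real.cos (Complex.arg z) := by linarith
    exact mul_lt_mul_of_pos_left this h0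
  -- inner gradient upper bound
  set C₁ : ℝ := 4 * c * ν * r₀ ^ ν with hC₁def
  have hr₀ν : (0:ℝ) < r₀ ^ ν := Real.rpow_pos_of_pos hr₀ _
  have hr₀ν1 : (0:ℝ) < r₀ ^ (ν - 1) := Real.rpow_pos_of_pos hr₀ _
  have hC₁pos : 0 < C₁ := by rw [hC₁def]; positivity
  have hJderivAt : ∀ t : ℝ, 0 < t → HasDerivAt J (deriv J t) t := by
    intro t ht
    exact ((hJsmooth.contDiffAt (isOpen_Ioi.mem_nhds ht)).differentiableAt
      (by norm_num)).hasDerivAt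
  have hupin : ∀ z ∈ Ω, ‖z‖ < δ' →
      ‖fderiv ℝ (fun w : ℂ => J (r₀ * ‖w‖) * Real.cos (ν * Complex.arg w)) z‖ ≤
        C₁ * (‖z‖) ^ (ν - 1) := by
    intro z hz hzδ
    obtain ⟨habs0, habs1, hslit⟩ := hΩmem z hz
    obtain ⟨ht0, htδ⟩ := hsmallt z habs0 hzδ
    obtain ⟨_, hup⟩ := grad_bounds J r₀ ν (deriv J (r₀ * ‖z‖)) z hslit
      (hJderivAt _ ht0)
    refine le_trans hup ?_
    obtain ⟨hJb, hd1, hd2⟩ := hB (r₀ * ‖z‖) ht0 htδ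
    have htν1 : (0:ℝ) < (r₀ * ‖z‖) ^ (ν - 1) := Real.rpow_pos_of_pos ht0 _
    have hdpos : 0 < deriv J (r₀ * ‖z‖) := lt_of_lt_of_le (by positivity) hd1
    rw [abs_of_pos hdpos, abs_of_pos hr₀, abs_of_pos hν0]
    have hsp1 : (r₀ * ‖z‖) ^ (ν - 1) =
        r₀ ^ (ν - 1) * (‖z‖) ^ (ν - 1) := Real.mul_rpow hr₀.le habs0.le
    have hsp2 : (r₀ * ‖z‖) ^ ν = r₀ ^ ν * (‖z‖) ^ ν :=
      Real.mul_rpow hr₀.le habs0.le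
    have hsp3 : (‖z‖) ^ ν * (‖z‖)⁻¹ = (‖z‖) ^ (ν - 1) := by
      rw [Real.rpow_sub habs0, Real.rpow_one, div_eq_mul_inv]
    have hsp4 : r₀ ^ (ν - 1) * r₀ = r₀ ^ ν := by
      rw [← Real.rpow_add_one (ne_of_gt hr₀) (ν - 1), show ν - 1 + 1 = ν from by ring]
    have hzν1 : (0:ℝ) < (‖z‖) ^ (ν - 1) := Real.rpow_pos_of_pos habs0 _
    have hJabs : |J (r₀ * ‖z‖)| ≤ 2 * c * (r₀ ^ ν * (‖z‖) ^ ν) := by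
      rw [← hsp2]; exact hJb
    calc deriv J (r₀ * ‖z‖) * r₀ +
          |J (r₀ * ‖z‖)| * ν * (‖z‖)⁻¹
        ≤ (2 * (c * ν) * (r₀ ^ (ν - 1) * (‖z‖) ^ (ν - 1))) * r₀ +
          (2 * c * (r₀ ^ ν * (‖z‖) ^ ν)) * ν * (‖z‖)⁻¹ := by
          have h6 : deriv J (r₀ * ‖z‖) ≤
              2 * (c * ν) * (r₀ ^ (ν - 1) * (‖z‖) ^ (ν - 1)) := by
            rw [← hsp1]; exact hd2
          gcongr
      _ = 2 * (c * ν) * r₀ ^ (ν - 1) * r₀ * (‖z‖) ^ (ν - 1) +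
          2 * c * ν * r₀ ^ ν * ((‖z‖) ^ ν * (‖z‖)⁻¹) := by ring
      _ = C₁ * (‖z‖) ^ (ν - 1) := by
          rw [hsp3, hC₁def]
          rw [show 2 * (c * ν) * r₀ ^ (ν - 1) * r₀ = 2 * (c * ν) * (r₀ ^ (ν - 1) * r₀) from
            by ring, hsp4]
          ring
  -- outer gradient bound
  have hIccsub : Set.Icc (r₀ * δ') r₀ ⊆ Set.Ioi (0:ℝ) := by
    intro x hx
    have : 0 < r₀ * δ' := by positivity
    exact lt_of_lt_of_le this hx.1
  obtain ⟨M₁, hM₁⟩ := isCompact_Icc.exists_bound_of_continuousOn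
    (hJsmooth.continuousOn.mono hIccsub)
  obtain ⟨M₂, hM₂⟩ := isCompact_Icc.exists_bound_of_continuousOn
    (((hJsmooth.deriv_of_isOpen (m := 1) isOpen_Ioi (by norm_num)).continuousOn).mono hIccsub)
  have hr₀δ'le : r₀ * δ' ≤ r₀ := by nlinarith
  have hM₁0 : 0 ≤ M₁ := le_trans (norm_nonneg _) (hM₁ (r₀ * δ') ⟨le_refl _, hr₀δ'le⟩)
  have hM₂0 : 0 ≤ M₂ := le_trans (norm_nonneg _) (hM₂ (r₀ * δ') ⟨le_refl _, hr₀δ'le⟩)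
  set C₂ : ℝ := M₂ * r₀ + M₁ * ν * δ'⁻¹ with hC₂def
  have hC₂0 : 0 ≤ C₂ := by rw [hC₂def]; positivity
  have hupout : ∀ z ∈ Ω, δ' ≤ ‖z‖ →
      ‖fderiv ℝ (fun w : ℂ => J (r₀ * ‖w‖) * Real.cos (ν * Complex.arg w)) z‖ ≤
        C₂ := by
    intro z hz hzδ
    obtain ⟨habs0, habs1, hslit⟩ := hΩmem z hz
    have htmem : r₀ * ‖z‖ ∈ Set.Icc (r₀ * δ') r₀ := by
      constructor
      · gcongr
      · nlinarith
    obtain ⟨_, hup⟩ := grad_bounds J r₀ ν (deriv J (r₀ * ‖z‖)) z hslit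
      (hJderivAt _ (by positivity))
    refine le_trans hup ?_
    have h1 : |deriv J (r₀ * ‖z‖)| ≤ M₂ := by
      have := hM₂ _ htmem; rwa [Real.norm_eq_abs] at this
    have h2 : |J (r₀ * ‖z‖)| ≤ M₁ := by
      have := hM₁ _ htmem; rwa [Real.norm_eq_abs] at this
    have h3 : (‖z‖)⁻¹ ≤ δ'⁻¹ := by gcongr
    rw [abs_of_pos hr₀, abs_of_pos hν0, hC₂def]
    gcongr
  -- inner gradient lower bound
  set c₃ : ℝ := Real.cos (π / 4) * (c * ν / 2) * r₀ ^ ν with hc₃def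
  have hc₃pos : 0 < c₃ := by rw [hc₃def]; positivity
  have hlowin : ∀ z : ℂ, 0 < ‖z‖ → ‖z‖ < δ' →
      |Complex.arg z| < π / 4 →
      c₃ * (‖z‖) ^ (ν - 1) ≤
        ‖fderiv ℝ (fun w : ℂ => J (r₀ * ‖w‖) * Real.cos (ν * Complex.arg w)) z‖ := by
    intro z h0 h1 h2
    have hzΩ : z ∈ Ω := hS'Ω z h0 h1 h2
    obtain ⟨habs0, habs1, hslit⟩ := hΩmem z hzΩ
    obtain ⟨ht0, htδ⟩ := hsmallt z h0 h1
    obtain ⟨hlow, _⟩ := grad_bounds J r₀ ν (deriv J (r₀ * ‖z‖)) z hslit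
      (hJderivAt _ ht0)
    refine le_trans ?_ hlow
    obtain ⟨_, hd1, _⟩ := hB (r₀ * ‖z‖) ht0 htδ
    have htν1 : (0:ℝ) < (r₀ * ‖z‖) ^ (ν - 1) := Real.rpow_pos_of_pos ht0 _
    have hdpos : 0 < deriv J (r₀ * ‖z‖) := lt_of_lt_of_le (by positivity) hd1
    have hcosν : Real.cos (π / 4) ≤ Real.cos (ν * Complex.arg z) :=
      aux_cos_ge hν0 hν1.le h2
    have hcospos : 0 < Real.cos (ν * Complex.arg z) := lt_of_lt_of_le hcos4 hcosν
    have habspos : 0 < Real.cos (ν * Complex.arg z) * (deriv J (r₀ * ‖z‖) * r₀) := by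
      positivity
    rw [abs_of_pos habspos]
    have hsp1 : (r₀ * ‖z‖) ^ (ν - 1) =
        r₀ ^ (ν - 1) * (‖z‖) ^ (ν - 1) := Real.mul_rpow hr₀.le habs0.le
    have hsp4 : r₀ ^ (ν - 1) * r₀ = r₀ ^ ν := by
      rw [← Real.rpow_add_one (ne_of_gt hr₀) (ν - 1), show ν - 1 + 1 = ν from by ring]
    have hd1' : c * ν / 2 * (r₀ ^ (ν - 1) * (‖z‖) ^ (ν - 1)) ≤
        deriv J (r₀ * ‖z‖) := by
      rw [← hsp1]; exact hd1
    calc c₃ * (‖z‖) ^ (ν - 1)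
        = Real.cos (π / 4) * ((c * ν / 2) * (r₀ ^ (ν - 1) * (‖z‖) ^ (ν - 1)) * r₀) := by
          rw [hc₃def, ← hsp4]; ring
      _ ≤ Real.cos (ν * Complex.arg z) * (deriv J (r₀ * ‖z‖) * r₀) := by
          have hzν1 : (0:ℝ) < (‖z‖) ^ (ν - 1) := Real.rpow_pos_of_pos habs0 _
          have hfac : 0 ≤ (c * ν / 2) * (r₀ ^ (ν - 1) * (‖z‖) ^ (ν - 1)) * r₀ := by
            positivity
          apply mul_le_mul hcosν ?_ hfac hcospos.le
          gcongr
  -- dyadic radii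
  set R : ℕ → ℝ := fun k => δ' * (1 / 2) ^ k with hRdef
  have hRpos : ∀ k, 0 < R k := fun k => by rw [hRdef]; positivity
  have hRle : ∀ k, R k ≤ δ' := by
    intro k
    rw [hRdef]
    have h1 : ((1:ℝ) / 2) ^ k ≤ 1 := pow_le_one₀ (by norm_num) (by norm_num)
    nlinarith
  have hR0 : R 0 = δ' := by rw [hRdef]; norm_num
  have hRanti : ∀ j k : ℕ, j ≤ k → R k ≤ R j := by
    intro j k hjk
    rw [hRdef]
    have := pow_le_pow_of_le_one (by norm_num : (0:ℝ) ≤ 1/2) (by norm_num) hjk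
    nlinarith
  have hRsucc : ∀ k, R (k + 1) = R k / 2 := by
    intro k; simp only [hRdef]; rw [pow_succ]; ring
  -- measurability
  have hΩmeas : MeasurableSet Ω := by
    rw [hΩ]
    have e : {z : ℂ | ‖z‖ < 1 ∧ 0 < ‖z‖ ∧
        ‖z‖ * Real.cos β < z.re} =
        {z : ℂ | ‖z‖ < 1} ∩ ({z : ℂ | 0 < ‖z‖} ∩
          {z : ℂ | ‖z‖ * Real.cos β < z.re}) := by
      ext z; simp [Set.mem_setOf_eq, Set.mem_inter_iff, and_assoc]
    rw [e]
    refine MeasurableSet.inter ?_ (MeasurableSet.inter ?_ ?_)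
    · exact measurableSet_lt continuous_norm.measurable measurable_const
    · exact measurableSet_lt measurable_const continuous_norm.measurable
    · exact measurableSet_lt (continuous_norm.measurable.mul_const _)
        Complex.measurable_re
  constructor
  · -- Part 1 : finiteness
    intro p hp2 hplt
    have hp0 : (0:ℝ) ≤ p := by linarith
    have h1ν : 0 < 1 - ν := by linarith
    set q : ℝ := (ν - 1) * p with hqdef
    have hq0 : q ≤ 0 := by rw [hqdef]; nlinarith
    have hq2 : -q < 2 := by
      have := (lt_div_iff₀ h1ν).mp hplt
      rw [hqdef]; nlinarith
    set A : ℕ → Set ℂ := fun k =>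
      Ω ∩ {z : ℂ | R (k + 1) ≤ ‖z‖ ∧ ‖z‖ < R k} with hAdef
    set T : Set ℂ := Ω ∩ {z : ℂ | δ' ≤ ‖z‖} with hTdef
    have hAmeas : ∀ k, MeasurableSet (A k) := by
      intro k
      refine hΩmeas.inter ?_
      have e : {z : ℂ | R (k + 1) ≤ ‖z‖ ∧ ‖z‖ < R k} =
          {z : ℂ | R (k + 1) ≤ ‖z‖} ∩ {z : ℂ | ‖z‖ < R k} := rfl
      rw [e]
      exact (measurableSet_le measurable_const continuous_norm.measurable).inter
        (measurableSet_lt continuous_norm.measurable measurable_const)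
    have hTmeas : MeasurableSet T :=
      hΩmeas.inter (measurableSet_le measurable_const continuous_norm.measurable)
    have hcover : Ω ⊆ (⋃ k, A k) ∪ T := by
      intro z hz
      rcases lt_or_ge (‖z‖) δ' with hlt | hge
      · left
        have h0 := (hΩmem z hz).1
        obtain ⟨n, hn⟩ := exists_pow_lt_of_lt_one
          (show 0 < ‖z‖ / δ' by positivity) (by norm_num : (1:ℝ)/2 < 1)
        have hQn : R n ≤ ‖z‖ := by
          rw [hRdef]
          have := (lt_div_iff₀ hδ'pos).mp hn
          nlinarith
        have hex : ∃ m, R m ≤ ‖z‖ := ⟨n, hQn⟩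
        have hm := Nat.find_spec hex
        have hm0 : Nat.find hex ≠ 0 := by
          intro h0'
          rw [h0', hR0] at hm
          linarith
        obtain ⟨k, hk⟩ := Nat.exists_eq_succ_of_ne_zero hm0
        refine Set.mem_iUnion.mpr ⟨k, hz, ?_, ?_⟩
        · rw [hk] at hm; exact hm
        · have := Nat.find_min hex (show k < Nat.find hex by omega)
          exact not_le.mp this
      · right; exact ⟨hz, hge⟩
    -- constants for the geometric series
    set G : ℝ := C₁ ^ p * (δ' / 2) ^ q * (π * δ' ^ 2) with hGdef
    have hG0 : 0 ≤ G := by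
      rw [hGdef]
      have := Real.rpow_nonneg hC₁pos.le p
      have := Real.rpow_nonneg (show (0:ℝ) ≤ δ'/2 by positivity) q
      positivity
    set w : ℝ := (1 / 2 : ℝ) ^ q * (1 / 4) with hwdef
    have hw0 : 0 ≤ w := by
      rw [hwdef]
      have := Real.rpow_nonneg (show (0:ℝ) ≤ 1/2 by norm_num) q
      positivity
    have hw1 : w < 1 := by
      rw [hwdef]
      have e1 : ((1:ℝ)/2) ^ q = 2 ^ (-q) := by
        rw [show ((1:ℝ)/2) = 2⁻¹ from by norm_num,
          Real.inv_rpow (by norm_num : (0:ℝ) ≤ 2), ← Real.rpow_neg (by norm_num : (0:ℝ) ≤ 2)]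
      rw [e1]
      have h2 : (2:ℝ) ^ (-q) < 2 ^ (2:ℝ) :=
        (Real.rpow_lt_rpow_left_iff (by norm_num : (1:ℝ) < 2)).mpr hq2
      have h3 : (2:ℝ) ^ (2:ℝ) = 4 := by
        rw [show (2:ℝ) = ((2:ℕ):ℝ) from by norm_num, Real.rpow_natCast]
        norm_num
      nlinarith [Real.rpow_pos_of_pos (show (0:ℝ) < 2 by norm_num) (-q)]
    have hpowswap : ∀ (x : ℝ), 0 ≤ x → ∀ (k : ℕ), ((x ^ k : ℝ)) ^ q = (x ^ q) ^ k := by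
      intro x hx k
      rw [← Real.rpow_natCast x k, ← Real.rpow_mul hx, mul_comm, Real.rpow_mul hx,
        Real.rpow_natCast]
    -- per-annulus bound
    have key1 : ∀ k, (∫⁻ z in A k, ENNReal.ofReal
        (‖fderiv ℝ (fun w : ℂ => J (r₀ * ‖w‖) * Real.cos (ν * Complex.arg w)) z‖ ^ p))
        ≤ ENNReal.ofReal (G * w ^ k) := by
      intro k
      have hfsmall : ∀ z ∈ A k, ENNReal.ofReal
          (‖fderiv ℝ (fun w : ℂ => J (r₀ * ‖w‖) * Real.cos (ν * Complex.arg w)) z‖ ^ p)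
          ≤ ENNReal.ofReal (C₁ ^ p * (R (k + 1)) ^ q) := by
        intro z hz
        obtain ⟨hzΩ, hz1, hz2⟩ := hz
        have hzδ : ‖z‖ < δ' := lt_of_lt_of_le hz2 (hRle k)
        have h0 : 0 < ‖z‖ := (hΩmem z hzΩ).1
        apply ENNReal.ofReal_le_ofReal
        calc ‖fderiv ℝ (fun w : ℂ => J (r₀ * ‖w‖) * Real.cos (ν * Complex.arg w)) z‖ ^ p
            ≤ (C₁ * (‖z‖) ^ (ν - 1)) ^ p :=
              Real.rpow_le_rpow (norm_nonneg _) (hupin z hzΩ hzδ) hp0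
          _ = C₁ ^ p * ((‖z‖) ^ (ν - 1)) ^ p :=
              Real.mul_rpow hC₁pos.le (Real.rpow_nonneg h0.le _)
          _ = C₁ ^ p * (‖z‖) ^ q := by
              rw [← Real.rpow_mul h0.le (ν - 1) p, ← hqdef]
          _ ≤ C₁ ^ p * (R (k + 1)) ^ q := by
              apply mul_le_mul_of_nonneg_left
                (Real.rpow_le_rpow_of_nonpos (hRpos (k+1)) hz1 hq0)
                (Real.rpow_nonneg hC₁pos.le _)
      have hvol : volume (A k) ≤ ENNReal.ofReal (π * (R k) ^ 2) := by
        have hsub : A k ⊆ Metric.ball (0:ℂ) (R k) := by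
          intro z hz
          rw [Metric.mem_ball]
          have e : dist z 0 = ‖z‖ := by rw [Complex.dist_eq, sub_zero]
          rw [e]; exact hz.2.2
        refine le_trans (measure_mono hsub) ?_
        rw [Complex.volume_ball]
        rw [← ENNReal.ofReal_pow (hRpos k).le]
        have hpi : (NNReal.pi : ℝ≥0∞) = ENNReal.ofReal π := by
          rw [← NNReal.coe_real_pi, ENNReal.ofReal_coe_nnreal]
        rw [hpi, ← ENNReal.ofReal_mul (by positivity)]
        exact ENNReal.ofReal_le_ofReal (le_of_eq (by ring))
      calc (∫⁻ z in A k, ENNReal.ofReal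
          (‖fderiv ℝ (fun w : ℂ => J (r₀ * ‖w‖) * Real.cos (ν * Complex.arg w)) z‖ ^ p))
          ≤ ∫⁻ _ in A k, ENNReal.ofReal (C₁ ^ p * (R (k + 1)) ^ q) :=
            setLIntegral_mono' (hAmeas k) hfsmall
        _ = ENNReal.ofReal (C₁ ^ p * (R (k + 1)) ^ q) * volume (A k) :=
            setLIntegral_const _ _
        _ ≤ ENNReal.ofReal (C₁ ^ p * (R (k + 1)) ^ q) * ENNReal.ofReal (π * (R k) ^ 2) :=
            mul_le_mul_right hvol _
        _ = ENNReal.ofReal (G * w ^ k) := by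
            rw [← ENNReal.ofReal_mul (by
              have := Real.rpow_nonneg (hRpos (k+1)).le q
              have := Real.rpow_nonneg hC₁pos.le p
              positivity)]
            apply congrArg
            have e1 : R (k + 1) = (δ' / 2) * (1/2) ^ k := by
              simp only [hRdef]; rw [pow_succ]; ring
            have e2 : (R (k + 1)) ^ q = (δ' / 2) ^ q * ((1/2 : ℝ) ^ q) ^ k := by
              rw [e1, Real.mul_rpow (by positivity) (by positivity),
                hpowswap (1/2 : ℝ) (by norm_num) k]
            have e3 : (R k) ^ 2 = δ' ^ 2 * ((1:ℝ)/4) ^ k := by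
              simp only [hRdef]
              rw [mul_pow, ← pow_mul, show k * 2 = 2 * k from by ring, pow_mul]
              norm_num
            rw [e2, e3, hGdef, hwdef, mul_pow]
            ring
    -- outer piece bound
    have houtb : (∫⁻ z in T, ENNReal.ofReal
        (‖fderiv ℝ (fun w : ℂ => J (r₀ * ‖w‖) * Real.cos (ν * Complex.arg w)) z‖ ^ p))
        ≤ ENNReal.ofReal (C₂ ^ p) * volume (Metric.ball (0:ℂ) 1) := by
      have hfT : ∀ z ∈ T, ENNReal.ofReal
          (‖fderiv ℝ (fun w : ℂ => J (r₀ * ‖w‖) * Real.cos (ν * Complex.arg w)) z‖ ^ p)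
          ≤ ENNReal.ofReal (C₂ ^ p) := fun z hz =>
        ENNReal.ofReal_le_ofReal
          (Real.rpow_le_rpow (norm_nonneg _) (hupout z hz.1 hz.2) hp0)
      have hTsub : T ⊆ Metric.ball (0:ℂ) 1 := by
        intro z hz
        rw [Metric.mem_ball]
        have e : dist z 0 = ‖z‖ := by rw [Complex.dist_eq, sub_zero]
        rw [e]
        exact (hΩmem z hz.1).2.1
      calc (∫⁻ z in T, ENNReal.ofReal
          (‖fderiv ℝ (fun w : ℂ => J (r₀ * ‖w‖) * Real.cos (ν * Complex.arg w)) z‖ ^ p))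
          ≤ ∫⁻ _ in T, ENNReal.ofReal (C₂ ^ p) := setLIntegral_mono' hTmeas hfT
        _ = ENNReal.ofReal (C₂ ^ p) * volume T := setLIntegral_const _ _
        _ ≤ ENNReal.ofReal (C₂ ^ p) * volume (Metric.ball (0:ℂ) 1) :=
            mul_le_mul_right (measure_mono hTsub) _
    -- assemble
    calc (∫⁻ z in Ω, ENNReal.ofReal
        (‖fderiv ℝ (fun w : ℂ => J (r₀ * ‖w‖) * Real.cos (ν * Complex.arg w)) z‖ ^ p))
        ≤ ∫⁻ z in (⋃ k, A k) ∪ T, ENNReal.ofReal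
          (‖fderiv ℝ (fun w : ℂ => J (r₀ * ‖w‖) * Real.cos (ν * Complex.arg w)) z‖ ^ p) :=
          lintegral_mono_set hcover
      _ ≤ (∫⁻ z in ⋃ k, A k, ENNReal.ofReal
          (‖fderiv ℝ (fun w : ℂ => J (r₀ * ‖w‖) * Real.cos (ν * Complex.arg w)) z‖ ^ p)) +
          ∫⁻ z in T, ENNReal.ofReal
          (‖fderiv ℝ (fun w : ℂ => J (r₀ * ‖w‖) * Real.cos (ν * Complex.arg w)) z‖ ^ p) :=
          lintegral_union_le _ _ _
      _ ≤ (∑' k, ∫⁻ z in A k, ENNReal.ofReal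
          (‖fderiv ℝ (fun w : ℂ => J (r₀ * ‖w‖) * Real.cos (ν * Complex.arg w)) z‖ ^ p)) +
          ∫⁻ z in T, ENNReal.ofReal
          (‖fderiv ℝ (fun w : ℂ => J (r₀ * ‖w‖) * Real.cos (ν * Complex.arg w)) z‖ ^ p) :=
          add_le_add_left (lintegral_iUnion_le _ _) _
      _ ≤ (∑' k : ℕ, ENNReal.ofReal (G * w ^ k)) +
          ENNReal.ofReal (C₂ ^ p) * volume (Metric.ball (0:ℂ) 1) :=
          add_le_add (ENNReal.tsum_le_tsum key1) houtb
      _ < ⊤ := by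
          apply ENNReal.add_lt_top.mpr
          constructor
          · have e : ∀ k : ℕ, ENNReal.ofReal (G * w ^ k) =
                ENNReal.ofReal G * (ENNReal.ofReal w) ^ k := fun k => by
              rw [ENNReal.ofReal_mul hG0, ENNReal.ofReal_pow hw0]
            rw [tsum_congr e, ENNReal.tsum_mul_left, ENNReal.tsum_geometric]
            apply ENNReal.mul_lt_top ENNReal.ofReal_lt_top
            rw [ENNReal.inv_lt_top]
            rw [tsub_pos_iff_lt]
            exact ENNReal.ofReal_lt_one.mpr hw1
          · exact ENNReal.mul_lt_top ENNReal.ofReal_lt_top measure_ball_lt_top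
  · -- Part 2 : divergence at the critical exponent
    set p' : ℝ := 2 / (1 - ν) with hp'def
    have h1ν : 0 < 1 - ν := by linarith
    have hp'pos : 0 < p' := by rw [hp'def]; positivity
    have hexp : (ν - 1) * p' = -2 := by
      rw [hp'def]
      field_simp
      ring
    have hexp0 : (ν - 1) * p' ≤ 0 := by rw [hexp]; norm_num
    set x : ℕ → ℂ := fun k => ((3 / 4 * R k : ℝ) : ℂ) with hxdef
    set Bb : ℕ → Set ℂ := fun k => Metric.ball (x k) (R k / 8) with hBbdef
    have hballmem : ∀ k, ∀ w ∈ Bb k, 5/8 * R k < ‖w‖ ∧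
        ‖w‖ < 7/8 * R k ∧ 0 < w.re ∧ |w.im| < w.re := by
      intro k w hw
      rw [hBbdef] at hw
      simp only [Metric.mem_ball, Complex.dist_eq] at hw
      have hRk := hRpos k
      have hxabs : ‖x k‖ = 3/4 * R k := by
        rw [hxdef]
        simp only [Complex.norm_real, Real.norm_eq_abs]
        rw [abs_of_nonneg (by positivity)]
      have h1 : |‖w‖ - ‖x k‖| ≤ ‖w - x k‖ :=
        abs_norm_sub_norm_le w (x k)
      have hxre : (x k).re = 3/4 * R k := by rw [hxdef]; exact Complex.ofReal_re _
      have hxim : (x k).im = 0 := by rw [hxdef]; exact Complex.ofReal_im _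
      have h2 : |w.re - 3/4 * R k| ≤ ‖w - x k‖ := by
        have := Complex.abs_re_le_norm (w - x k)
        rwa [Complex.sub_re, hxre] at this
      have h3 : |w.im| ≤ ‖w - x k‖ := by
        have := Complex.abs_im_le_norm (w - x k)
        rwa [Complex.sub_im, hxim, sub_zero] at this
      rw [hxabs] at h1
      have h1' := abs_lt.mp (lt_of_le_of_lt h1 hw)
      have h2' := abs_lt.mp (lt_of_le_of_lt h2 hw)
      have h3' := lt_of_le_of_lt h3 hw
      have h4 := abs_lt.mp h3'
      refine ⟨by linarith [h1'.1], by linarith [h1'.2], by linarith [h2'.1], ?_⟩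
      rw [abs_lt]
      constructor <;> linarith [h2'.1]
    have hBbS : ∀ k, ∀ w ∈ Bb k, 0 < ‖w‖ ∧ ‖w‖ < δ' ∧
        |Complex.arg w| < π / 4 ∧ ‖w‖ < R k := by
      intro k w hw
      obtain ⟨hm1, hm2, hm3, hm4⟩ := hballmem k w hw
      have hRk := hRpos k
      have hRkδ := hRle k
      refine ⟨by linarith, by linarith, aux_arg_lt hm3 hm4, by linarith⟩
    have hdisj : Pairwise (Function.onFun Disjoint Bb) := by
      rw [pairwise_disjoint_on]
      intro j k hjk
      rw [Set.disjoint_left]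
      intro w hwj hwk
      obtain ⟨ha1, ha2, _, _⟩ := hballmem j w hwj
      obtain ⟨hb1, hb2, _, _⟩ := hballmem k w hwk
      have hRk : R k ≤ R (j + 1) := hRanti (j + 1) k hjk
      rw [hRsucc j] at hRk
      have := hRpos j
      linarith
    have hBbΩ : ∀ k, Bb k ⊆ Ω := by
      intro k w hw
      obtain ⟨h0, h1, h2, _⟩ := hBbS k w hw
      exact hS'Ω w h0 h1 h2
    set η : ℝ≥0∞ := ENNReal.ofReal (c₃ ^ p' * π / 64) with hηdef
    have hηpos : η ≠ 0 := by
      rw [hηdef]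
      apply ne_of_gt
      apply ENNReal.ofReal_pos.mpr
      have := Real.rpow_pos_of_pos hc₃pos p'
      positivity
    have hterm : ∀ k, η ≤ ∫⁻ z in Bb k, ENNReal.ofReal
        (‖fderiv ℝ (fun w : ℂ => J (r₀ * ‖w‖) * Real.cos (ν * Complex.arg w)) z‖ ^ p') := by
      intro k
      have hRk := hRpos k
      have hpt : ∀ z ∈ Bb k, ENNReal.ofReal (c₃ ^ p' * (R k) ^ (-2 : ℝ)) ≤ ENNReal.ofReal
          (‖fderiv ℝ (fun w : ℂ => J (r₀ * ‖w‖) * Real.cos (ν * Complex.arg w)) z‖ ^ p') := by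
        intro z hz
        obtain ⟨h0, hδ, harg, hRkz⟩ := hBbS k z hz
        apply ENNReal.ofReal_le_ofReal
        have hlow := hlowin z h0 hδ harg
        calc c₃ ^ p' * (R k) ^ (-2 : ℝ) = c₃ ^ p' * (R k) ^ ((ν - 1) * p') := by rw [hexp]
          _ ≤ c₃ ^ p' * (‖z‖) ^ ((ν - 1) * p') :=
              mul_le_mul_of_nonneg_left
                (Real.rpow_le_rpow_of_nonpos h0 hRkz.le hexp0)
                (Real.rpow_nonneg hc₃pos.le _)
          _ = (c₃ * (‖z‖) ^ (ν - 1)) ^ p' := by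
              rw [Real.mul_rpow hc₃pos.le (Real.rpow_nonneg h0.le _),
                ← Real.rpow_mul h0.le (ν - 1) p']
          _ ≤ ‖fderiv ℝ (fun w : ℂ => J (r₀ * ‖w‖) * Real.cos (ν * Complex.arg w)) z‖ ^ p' :=
              Real.rpow_le_rpow (by positivity) hlow hp'pos.le
      have hvol : volume (Bb k) = ENNReal.ofReal ((R k / 8) ^ 2 * π) := by
        rw [hBbdef]
        simp only
        rw [Complex.volume_ball, ← ENNReal.ofReal_pow (by positivity : (0:ℝ) ≤ R k / 8)]
        have hpi : (NNReal.pi : ℝ≥0∞) = ENNReal.ofReal π := by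
          rw [← NNReal.coe_real_pi, ENNReal.ofReal_coe_nnreal]
        rw [hpi, ← ENNReal.ofReal_mul (by positivity)]
      have hηeq : η = ENNReal.ofReal (c₃ ^ p' * (R k) ^ (-2 : ℝ)) * volume (Bb k) := by
        rw [hvol, hηdef, ← ENNReal.ofReal_mul (by
          have := Real.rpow_nonneg hc₃pos.le p'
          have := Real.rpow_nonneg hRk.le (-2 : ℝ)
          positivity)]
        apply congrArg
        have hneg2 : (R k) ^ (-2 : ℝ) = ((R k) ^ (2:ℕ))⁻¹ := by
          rw [Real.rpow_neg hRk.le, ← Real.rpow_natCast (R k) 2]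
          norm_num
        rw [hneg2]
        field_simp
        ring
      calc η = ENNReal.ofReal (c₃ ^ p' * (R k) ^ (-2 : ℝ)) * volume (Bb k) := hηeq
        _ = ∫⁻ _ in Bb k, ENNReal.ofReal (c₃ ^ p' * (R k) ^ (-2 : ℝ)) :=
            (setLIntegral_const _ _).symm
        _ ≤ ∫⁻ z in Bb k, ENNReal.ofReal
            (‖fderiv ℝ (fun w : ℂ => J (r₀ * ‖w‖) * Real.cos (ν * Complex.arg w)) z‖ ^ p') :=
            setLIntegral_mono' measurableSet_ball hpt
    have hBm : ∀ k, MeasurableSet (Bb k) := by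
      intro k
      simp only [hBbdef]
      exact measurableSet_ball
    have hsum := lintegral_iUnion (μ := volume) hBm hdisj
      (fun z => ENNReal.ofReal
        (‖fderiv ℝ (fun w : ℂ => J (r₀ * ‖w‖) * Real.cos (ν * Complex.arg w)) z‖ ^ p'))
    have htople : (⊤ : ℝ≥0∞) ≤ ∫⁻ z in Ω, ENNReal.ofReal
        (‖fderiv ℝ (fun w : ℂ => J (r₀ * ‖w‖) * Real.cos (ν * Complex.arg w)) z‖ ^ p') := by
      calc (⊤ : ℝ≥0∞) = ∑' _ : ℕ, η := (ENNReal.tsum_const_eq_top_of_ne_zero hηpos).symm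
        _ ≤ ∑' k : ℕ, ∫⁻ z in Bb k, ENNReal.ofReal
            (‖fderiv ℝ (fun w : ℂ => J (r₀ * ‖w‖) * Real.cos (ν * Complex.arg w)) z‖ ^ p') :=
            ENNReal.tsum_le_tsum hterm
        _ = ∫⁻ z in ⋃ k, Bb k, ENNReal.ofReal
            (‖fderiv ℝ (fun w : ℂ => J (r₀ * ‖w‖) * Real.cos (ν * Complex.arg w)) z‖ ^ p') :=
            hsum.symm
        _ ≤ ∫⁻ z in Ω, ENNReal.ofReal
            (‖fderiv ℝ (fun w : ℂ => J (r₀ * ‖w‖) * Real.cos (ν * Complex.arg w)) z‖ ^ p') :=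
            lintegral_mono_set (Set.iUnion_subset hBbΩ)
    exact top_le_iff.mp htople
end
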